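/- arXiv:2305.11026 — 10 statements merged into one kernel-verified Lean document; each statement's English description precedes it below -/
import Mathlib

section
/- Let e ≥ 1 and k ≥ 1. There exists a Λ-module of dimension k (i.e. a k-dimensional F₂-vector space V with a representation ρ : D → GL(V) and a vector x ∈ V such that ρ(g₂)x = x and V is generated by x as an R-module) if and only if k ≤ 2^(e+1). -/
/-!
If `x` is fixed by the reflection `sr 1`, then `g ↦ ρ g x` factors through the cosets of
`⟨sr 1⟩`, a subgroup of index `2^(e+1)`, so `V` is spanned by at most `2^(e+1)` vectors.

Conversely, for `k ≤ 2^(e+1)` take `A = F₂[X]/((X - 1)^k)` with `t = X`. In characteristic 2,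
`(X - 1)^(2^(e+1)) = X^(2^(e+1)) - 1`, so `t^(2^(e+1)) = 1`, and `X ↦ X⁻¹` induces an involution
`σ` of `A`. Rotations act by powers of `t` and reflections by `σ` twisted by `t`; then `sr 1` acts
as `σ` and fixes `1`, whose orbit contains every power of `t` and hence spans `A`.
-/

open Polynomial Module Submodule

namespace DihedralGroup

theorem index_zpowers_sr {n : ℕ} (i : ZMod n) : (Subgroup.zpowers (sr i)).index = n := by
  have h := (Subgroup.zpowers (sr i)).index_mul_card
  rw [Nat.card_zpowers, orderOf_sr, nat_card] at h
  omega

variable {M : Type*} [Monoid M] {n : ℕ} [NeZero n]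

def lift (T S : M) (hT : T ^ n = 1) (hS : S * S = 1) (hTS : T * S = S * T ^ (n - 1)) :
    DihedralGroup n →* M where
  toFun
    | r i => T ^ i.val
    | sr i => S * T ^ i.val
  map_one' := by change T ^ (0 : ZMod n).val = 1; rw [ZMod.val_zero, pow_zero]
  map_mul' := by
    have pow_eq_of_cast_eq (p q : ℕ) (h : (p : ZMod n) = q) : T ^ p = T ^ q := by
      rw [pow_eq_pow_mod p hT, pow_eq_pow_mod q hT, (ZMod.natCast_eq_natCast_iff' p q n).mp h]
    have pow_mul_S (m : ℕ) : T ^ m * S = S * T ^ ((n - 1) * m) := by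
      induction m with
      | zero => simp
      | succ m ih =>
        rw [pow_succ', mul_assoc, ih, ← mul_assoc, hTS, mul_assoc, ← pow_add]
        ring_nf
    have hn : ((n - 1 : ℕ) : ZMod n) = -1 := by
      rw [Nat.cast_pred (Nat.pos_of_neZero n), ZMod.natCast_self, zero_sub]
    rintro (i | i) (j | j)
    · change T ^ (i + j).val = T ^ i.val * T ^ j.val
      rw [← pow_add]
      exact pow_eq_of_cast_eq _ _ (by push_cast [ZMod.natCast_zmod_val]; rfl)
    · change S * T ^ (j - i).val = T ^ i.val * (S * T ^ j.val)
      rw [← mul_assoc, pow_mul_S, mul_assoc, ← pow_add]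
      congr 1
      exact pow_eq_of_cast_eq _ _ (by push_cast [hn, ZMod.natCast_zmod_val]; ring)
    · change S * T ^ (i + j).val = S * T ^ i.val * T ^ j.val
      rw [mul_assoc, ← pow_add]
      congr 1
      exact pow_eq_of_cast_eq _ _ (by push_cast [ZMod.natCast_zmod_val]; rfl)
    · change T ^ (j - i).val = S * T ^ i.val * (S * T ^ j.val)
      rw [mul_assoc, ← mul_assoc (T ^ i.val), pow_mul_S, ← mul_assoc, ← mul_assoc, hS, one_mul,
        ← pow_add]
      exact pow_eq_of_cast_eq _ _ (by push_cast [hn, ZMod.natCast_zmod_val]; ring)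

@[simp]
theorem lift_r (T S : M) (hT hS hTS) (i : ZMod n) : lift T S hT hS hTS (r i) = T ^ i.val := rfl

@[simp]
theorem lift_sr (T S : M) (hT hS hTS) (i : ZMod n) :
    lift T S hT hS hTS (sr i) = S * T ^ i.val := rfl

end DihedralGroup

namespace Representation

variable {k G V : Type*} [CommSemiring k] [StrongRankCondition k] [Group G] [AddCommMonoid V]
  [Module k V]

theorem finrank_span_orbit_le_index (ρ : Representation k G V) {x : V} {H : Subgroup G}
    [H.FiniteIndex] (hx : ∀ h ∈ H, ρ h x = x) :
    finrank k (span k (Set.range fun g => ρ g x)) ≤ H.index := by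
  let orbitMap : G ⧸ H → V := Quotient.lift (fun g => ρ g x) fun a b hab => by
    replace hab : a⁻¹ * b ∈ H := QuotientGroup.leftRel_apply.mp hab
    rw [← mul_inv_cancel_left a b, map_mul, Module.End.mul_apply, hx _ hab]
  have : Fintype (G ⧸ H) := .ofFinite _
  calc finrank k (span k (Set.range fun g => ρ g x))
      = finrank k (span k (Set.range orbitMap)) := by
        rw [← QuotientGroup.mk_surjective.range_comp]; rfl
    _ ≤ Fintype.card (G ⧸ H) := finrank_range_le_card orbitMap
    _ = H.index := by rw [Subgroup.index_eq_card, Nat.card_eq_fintype_card]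

section Dihedral

variable {R A : Type*} [CommRing R] [CommRing A] [Algebra R A] {n : ℕ} [NeZero n]

noncomputable def dihedralOfInvolution (t : A) (σ : A →ₐ[R] A) (ht : t ^ n = 1)
    (hσt : σ t * t = 1) (hσ : ∀ y, σ (σ y) = y) : Representation R (DihedralGroup n) A :=
  DihedralGroup.lift (LinearMap.mulLeft R t) (LinearMap.mulLeft R t ∘ₗ σ.toLinearMap)
    (by rw [LinearMap.pow_mulLeft, ht, LinearMap.mulLeft_one, Module.End.one_eq_id])
    (LinearMap.ext fun y => by
      change t * σ (t * σ y) = y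
      rw [map_mul, hσ, ← mul_assoc, mul_comm t, hσt, one_mul])
    (LinearMap.ext fun y => by
      have hσt_pow : σ t ^ (n - 1) = t := by
        calc σ t ^ (n - 1) = σ t ^ (n - 1) * t ^ n := by rw [ht, mul_one]
          _ = (σ t * t) ^ (n - 1) * t := by
            rw [mul_pow, mul_assoc, ← pow_succ, Nat.sub_add_cancel (Nat.pos_of_neZero n)]
          _ = t := by rw [hσt, one_pow, one_mul]
      simp only [Module.End.mul_apply, LinearMap.pow_mulLeft, LinearMap.comp_apply,
        LinearMap.mulLeft_apply, AlgHom.toLinearMap_apply, map_mul, map_pow, hσt_pow])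

variable {t : A} {σ : A →ₐ[R] A} {ht : t ^ n = 1} {hσt : σ t * t = 1} {hσ : ∀ y, σ (σ y) = y}

theorem dihedralOfInvolution_r_apply (i : ZMod n) (y : A) :
    dihedralOfInvolution t σ ht hσt hσ (.r i) y = t ^ i.val * y := by
  simp [dihedralOfInvolution, LinearMap.pow_mulLeft]

theorem dihedralOfInvolution_sr_one_apply (y : A) :
    dihedralOfInvolution t σ ht hσt hσ (.sr 1) y = σ y := by
  have : t ^ (1 : ZMod n).val = t := by rw [ZMod.val_one_eq_one_mod, ← pow_eq_pow_mod 1 ht, pow_one]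
  simp only [dihedralOfInvolution, DihedralGroup.lift_sr, Module.End.mul_apply,
    LinearMap.pow_mulLeft, LinearMap.comp_apply, LinearMap.mulLeft_apply,
    AlgHom.toLinearMap_apply, this, map_mul]
  rw [← mul_assoc, mul_comm t, hσt, one_mul]

theorem span_dihedralOfInvolution_orbit_one (hgen : Algebra.adjoin R {t} = ⊤) :
    span R (Set.range fun g => dihedralOfInvolution t σ ht hσt hσ g 1) = ⊤ := by
  rw [eq_top_iff, ← Algebra.top_toSubmodule, ← hgen, Algebra.adjoin_eq_span]
  refine span_mono ?_
  intro y hy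
  obtain ⟨m, rfl⟩ := Submonoid.mem_closure_singleton.mp hy
  refine ⟨.r m, ?_⟩
  dsimp only
  rw [dihedralOfInvolution_r_apply, mul_one, ZMod.val_natCast, ← pow_eq_pow_mod m ht]

end Dihedral

end Representation

abbrev UnipotentQuotient (R : Type*) [CommRing R] (k : ℕ) : Type _ :=
  AdjoinRoot ((X - 1 : R[X]) ^ k)

namespace UnipotentQuotient

variable {R : Type*} [CommRing R] {k : ℕ}

variable (R k) in
noncomputable abbrev gen : UnipotentQuotient R k := AdjoinRoot.root _

theorem gen_sub_one_pow : (gen R k - 1) ^ k = 0 := by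
  have h := AdjoinRoot.mk_self (f := (X - 1 : R[X]) ^ k)
  rwa [map_pow, map_sub, AdjoinRoot.mk_X, map_one] at h

theorem isUnit_gen : IsUnit (gen R k) := by
  simpa using IsNilpotent.isUnit_add_one ⟨k, gen_sub_one_pow (R := R)⟩

theorem gen_pow_eq_one {p m : ℕ} [ExpChar R p] (hk : k ≤ p ^ m) : gen R k ^ p ^ m = 1 := by
  have h : AdjoinRoot.mk ((X - 1 : R[X]) ^ k) ((X - 1) ^ p ^ m) = 0 :=
    AdjoinRoot.mk_eq_zero.mpr (pow_dvd_pow _ hk)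
  simpa [sub_pow_expChar_pow, sub_eq_zero] using h

variable (R k) in
noncomputable def genUnit : (UnipotentQuotient R k)ˣ := isUnit_gen.unit

@[simp]
theorem val_genUnit : (genUnit R k : UnipotentQuotient R k) = gen R k := rfl

variable (R k) in
noncomputable def invGen : UnipotentQuotient R k →ₐ[R] UnipotentQuotient R k :=
  AdjoinRoot.liftAlgHom _ (Algebra.ofId R _) ↑(genUnit R k)⁻¹ <| by
    have h : (↑(genUnit R k)⁻¹ : UnipotentQuotient R k) - 1 =
        -(↑(genUnit R k)⁻¹ * (gen R k - 1)) := by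
      rw [mul_sub, ← val_genUnit, Units.inv_mul, mul_one, neg_sub]
    rw [eval₂_pow, eval₂_sub, eval₂_X, eval₂_one, h, neg_pow, mul_pow, gen_sub_one_pow, mul_zero,
      mul_zero]

theorem invGen_gen : invGen R k (gen R k) = ↑(genUnit R k)⁻¹ := by
  simp [invGen]

theorem invGen_gen_mul_gen : invGen R k (gen R k) * gen R k = 1 := by
  rw [invGen_gen, ← val_genUnit, Units.inv_mul]

theorem invGen_invGen (y : UnipotentQuotient R k) : invGen R k (invGen R k y) = y := by
  suffices (invGen R k).comp (invGen R k) = AlgHom.id R _ from congrArg (· y) this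
  refine AdjoinRoot.algHom_ext ?_
  rw [AlgHom.comp_apply, AlgHom.id_apply]
  refine left_inv_eq_right_inv (a := invGen R k (gen R k)) ?_ invGen_gen_mul_gen
  rw [← map_mul, invGen_gen, ← val_genUnit, Units.inv_mul, map_one]

theorem finrank_eq [Nontrivial R] : finrank R (UnipotentQuotient R k) = k := by
  have hmonic : (X - 1 : R[X]).Monic := by simpa using monic_X_sub_C (1 : R)
  have hdeg : (X - 1 : R[X]).natDegree = 1 := by simpa using natDegree_X_sub_C (1 : R)
  rw [(AdjoinRoot.powerBasis' (hmonic.pow k)).finrank, AdjoinRoot.powerBasis'_dim,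
    hmonic.natDegree_pow, hdeg, mul_one]

end UnipotentQuotient

theorem lambda_module_exists_iff_general (e k : ℕ) :
    (∃ (V : Type) (_ : AddCommGroup V) (_ : Module (ZMod 2) V)
      (ρ : Representation (ZMod 2) (DihedralGroup (2 ^ (e + 1))) V) (x : V),
        ρ (DihedralGroup.sr 1) x = x ∧
        Submodule.span (ZMod 2)
          (Set.range fun g : DihedralGroup (2 ^ (e + 1)) => ρ g x) = ⊤ ∧
        Module.finrank (ZMod 2) V = k) ↔
      k ≤ 2 ^ (e + 1) := by
  constructor
  · rintro ⟨V, _, _, ρ, x, hfix, hspan, rfl⟩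
    have hstab : ∀ h ∈ Subgroup.zpowers (DihedralGroup.sr 1), ρ h x = x := by
      intro h hh
      obtain ⟨m, rfl⟩ := mem_powers_iff_mem_zpowers.mpr hh
      rw [map_pow, Module.End.pow_apply, Function.iterate_fixed hfix]
    calc finrank (ZMod 2) V = finrank (ZMod 2) (span (ZMod 2) (Set.range fun g => ρ g x)) := by
          rw [hspan, finrank_top]
      _ ≤ (Subgroup.zpowers (DihedralGroup.sr 1)).index := ρ.finrank_span_orbit_le_index hstab
      _ = 2 ^ (e + 1) := DihedralGroup.index_zpowers_sr 1
  · intro hk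
    let ρ := Representation.dihedralOfInvolution (R := ZMod 2) (n := 2 ^ (e + 1)) _ _
      (UnipotentQuotient.gen_pow_eq_one (p := 2) hk) UnipotentQuotient.invGen_gen_mul_gen
      UnipotentQuotient.invGen_invGen
    refine ⟨UnipotentQuotient (ZMod 2) k, _, _, ρ, 1, ?_, ?_, UnipotentQuotient.finrank_eq⟩
    · rw [Representation.dihedralOfInvolution_sr_one_apply, map_one]
    · exact Representation.span_dihedralOfInvolution_orbit_one AdjoinRoot.adjoinRoot_eq_top

/-- Let `e ≥ 1` and `k ≥ 1`.  Let `D` be the dihedral group of order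
`2^(e+2)` with reflections `g₁ = sr 0`, `g₂ = sr 1`.  A `Λ`-module of dimension `k` (an
`F₂`-vector space `V` with a representation `ρ : D → GL(V)` and `x ∈ V` with `ρ(g₂) x = x`
and `V = R·x` for `R = F₂[D]`, of `F₂`-dimension `k`) exists iff `k ≤ 2^(e+1)`. -/
theorem lambda_module_exists_iff (e k : ℕ) (he : 1 ≤ e) (hk : 1 ≤ k) :
    (∃ (V : Type) (_ : AddCommGroup V) (_ : Module (ZMod 2) V)
      (ρ : Representation (ZMod 2) (DihedralGroup (2 ^ (e + 1))) V) (x : V),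
        ρ (DihedralGroup.sr 1) x = x ∧
        Submodule.span (ZMod 2)
          (Set.range fun g : DihedralGroup (2 ^ (e + 1)) => ρ g x) = ⊤ ∧
        Module.finrank (ZMod 2) V = k) ↔
      k ≤ 2 ^ (e + 1) :=
  lambda_module_exists_iff_general e k
end

section
/- Let e ≥ 1 and let (V, x) be a Λ-module of dimension k (so k ≤ 2^(e+1)), with associated representation ρ : D → GL(V). Then ρ is injective (i.e. the representation is faithful) if and only if 2^e < k. -/
/-! The rotation `r 1` acts by `u = 1 + N` with `N` nilpotent, and in characteristic 2
`u ^ 2 ^ e = 1 + N ^ 2 ^ e`. For `e ≥ 1` every nontrivial normal subgroup of the dihedral group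
of order `2 ^ (e + 2)` contains the central rotation `r (2 ^ e)`, so `ρ` is faithful iff
`N ^ 2 ^ e ≠ 0`. Since `ρ (sr 1)` fixes `x`, the vectors `N ^ j x` span `V`, and for such a
cyclic nilpotent operator `N ^ m = 0` holds iff `dim V ≤ m`. -/

open Module Submodule DihedralGroup

theorem one_add_pow_two_pow {A : Type*} [Ring A] (h2 : (2 : A) = 0) (a : A) (m : ℕ) :
    (1 + a) ^ 2 ^ m = 1 + a ^ 2 ^ m := by
  induction m with
  | zero => simp
  | succ m ih =>
    rw [pow_succ, pow_mul, ih, (Commute.one_left _).add_sq, ← pow_mul]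
    simp [h2]

theorem pow_two_pow_eq_one_iff_sub_one_pow_eq_zero {A : Type*} [Ring A] (h2 : (2 : A) = 0)
    (u : A) (m : ℕ) :
    u ^ 2 ^ m = 1 ↔ (u - 1) ^ 2 ^ m = 0 := by
  rw [← add_eq_left (a := (1 : A)), ← one_add_pow_two_pow h2, add_sub_cancel]

theorem pow_two_pow_eq_one_of_pow_eq_one {M : Type*} [Monoid M] {u : M} {n i : ℕ}
    (hu : u ^ 2 ^ (n + 1) = 1) (hi : u ^ i = 1) (hi₀ : 0 < i) (hin : i < 2 ^ (n + 1)) :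
    u ^ 2 ^ n = 1 := by
  obtain ⟨a, ha, hord⟩ := (Nat.dvd_prime_pow Nat.prime_two).1 (orderOf_dvd_of_pow_eq_one hu)
  have hai : 2 ^ a ≤ i := hord ▸ Nat.le_of_dvd hi₀ (orderOf_dvd_of_pow_eq_one hi)
  have han : a ≠ n + 1 := by
    rintro rfl
    exact absurd hin (not_lt.2 hai)
  exact orderOf_dvd_iff_pow_eq_one.1 (hord ▸ pow_dvd_pow 2 (by omega))

namespace DihedralGroup

theorem exists_eq_r_one_pow_or_eq_r_one_pow_mul_sr_one {n : ℕ} [NeZero n]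
    (g : DihedralGroup n) : ∃ t : ℕ, g = r 1 ^ t ∨ g = r 1 ^ t * sr 1 := by
  rcases g with i | i
  · exact ⟨i.val, .inl (by rw [r_one_pow, ZMod.natCast_zmod_val])⟩
  · refine ⟨(1 - i).val, .inr ?_⟩
    rw [r_one_pow, ZMod.natCast_zmod_val, r_mul_sr, sub_sub_cancel]

theorem injective_iff_map_r_one_pow_ne_one {M : Type*} [Monoid M] {e : ℕ} (he : 1 ≤ e)
    (f : DihedralGroup (2 ^ (e + 1)) →* M) :
    Function.Injective f ↔ f (r 1) ^ 2 ^ e ≠ 1 := by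
  rw [injective_iff_map_eq_one]
  constructor
  · intro hf h
    rw [← map_pow] at h
    refine pow_ne_one_of_lt_orderOf (by positivity) ?_ (hf _ h)
    rw [orderOf_r_one]
    exact Nat.pow_lt_pow_right one_lt_two (Nat.lt_succ_self e)
  · intro hne g hg
    by_contra hg₁
    apply hne
    rcases g with i | i
    · have hi : i ≠ 0 := fun h => hg₁ (by rw [h]; rfl)
      refine pow_two_pow_eq_one_of_pow_eq_one ?_ ?_ (ZMod.val_pos.2 hi) (ZMod.val_lt i)
      · rw [← map_pow, r_one_pow_n, map_one]
      · rw [← map_pow, r_one_pow, ZMod.natCast_zmod_val, hg]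
    · -- a reflection in the kernel makes `f (r 1) = f (sr i * sr (i + 1))` an involution
      have hr : f (r 1) = f (sr (i + 1)) := by
        rw [← one_mul (f (sr (i + 1))), ← hg, ← map_mul, sr_mul_sr, add_sub_cancel_left]
      obtain ⟨c, hc⟩ : 2 ∣ 2 ^ e := dvd_pow_self 2 (by omega)
      rw [hc, pow_mul, hr, sq, ← map_mul, sr_mul_self, map_one, one_pow]

end DihedralGroup

namespace Module.End

variable {R M : Type*} [Ring R] [AddCommGroup M] [Module R M]

theorem span_range_pow_apply_eq {N : Module.End R M} {m : ℕ} (hN : N ^ m = 0) (x : M) :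
    span R (Set.range fun j : ℕ => (N ^ j) x) =
      span R (Set.range fun j : Fin m => (N ^ (j : ℕ)) x) := by
  refine le_antisymm (span_le.2 ?_) (span_mono ?_)
  · rintro _ ⟨j, rfl⟩
    rcases lt_or_ge j m with hj | hj
    · exact subset_span ⟨⟨j, hj⟩, rfl⟩
    · show (N ^ j) x ∈ _
      rw [← Nat.sub_add_cancel hj, pow_add, hN, mul_zero, LinearMap.zero_apply]
      exact zero_mem _
  · rintro _ ⟨j, rfl⟩
    exact ⟨j, rfl⟩

theorem pow_apply_mem_span_range_sub_one_pow_apply (f : Module.End R M) (x : M) (t : ℕ) :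
    (f ^ t) x ∈ span R (Set.range fun j : ℕ => ((f - 1) ^ j) x) := by
  set W := span R (Set.range fun j : ℕ => ((f - 1) ^ j) x)
  have hW : ∀ v ∈ W, (f - 1) v ∈ W := by
    intro v hv
    refine (span_le (p := W.comap (f - 1))).2 ?_ hv
    rintro _ ⟨j, rfl⟩
    exact subset_span ⟨j + 1, by simp only [pow_succ', mul_apply]⟩
  induction t with
  | zero => exact subset_span ⟨0, by simp⟩
  | succ t ih =>
    rw [pow_succ', mul_apply, ← sub_add_cancel f 1, LinearMap.add_apply, sub_add_cancel]
    exact add_mem (hW _ ih) ih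

theorem pow_eq_zero_iff_finrank_le {K V : Type*} [Field K] [AddCommGroup V] [Module K V]
    {N : Module.End K V} (hN : IsNilpotent N) {x : V}
    (hx : span K (Set.range fun j : ℕ => (N ^ j) x) = ⊤) (m : ℕ) :
    N ^ m = 0 ↔ finrank K V ≤ m := by
  obtain ⟨p, hp⟩ := id hN
  have : FiniteDimensional K V := Module.finite_def.2 <| Submodule.fg_def.2
    ⟨_, Set.finite_range _, (span_range_pow_apply_eq hp x).symm.trans hx⟩
  refine ⟨fun hm => ?_, fun hm => ?_⟩
  · simpa using finrank_le_of_span_eq_top ((span_range_pow_apply_eq hm x).symm.trans hx)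
  · have hfin : N ^ finrank K V = 0 := by
      simpa [hN.charpoly_eq_X_pow_finrank] using N.aeval_self_charpoly
    rw [← Nat.sub_add_cancel hm, pow_add, hfin, mul_zero]

end Module.End

theorem DihedralGroup.span_range_sub_one_pow_apply_eq_top {K V : Type*} [CommRing K]
    [AddCommGroup V] [Module K V] {n : ℕ} [NeZero n] (ρ : Representation K (DihedralGroup n) V)
    {x : V} (hx : ρ (sr 1) x = x) (hcyc : span K (Set.range fun g => ρ g x) = ⊤) :
    span K (Set.range fun j : ℕ => ((ρ (r 1) - 1) ^ j) x) = ⊤ := by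
  refine eq_top_iff.2 (hcyc.symm.le.trans (span_le.2 ?_))
  rintro _ ⟨g, rfl⟩
  obtain ⟨t, rfl | rfl⟩ := exists_eq_r_one_pow_or_eq_r_one_pow_mul_sr_one g <;>
  · simp only [map_pow, map_mul, Module.End.mul_apply, hx]
    exact Module.End.pow_apply_mem_span_range_sub_one_pow_apply (ρ (r 1)) x t

/-- Let `e ≥ 1` and let `(V, x)` be a `Λ`-module of dimension `k` over
`R = F₂[D]`, where `D` is the dihedral group of order `2^(e+2)` with `g₂ = sr 1`, and
with associated representation `ρ : D → GL(V)`.  Then `ρ` is faithful (injective) if and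
only if `2^e < k`. -/
theorem lambda_module_faithful_iff (e k : ℕ) (he : 1 ≤ e)
    (V : Type) [AddCommGroup V] [Module (ZMod 2) V]
    (ρ : Representation (ZMod 2) (DihedralGroup (2 ^ (e + 1))) V)
    (x : V)
    (hx : ρ (DihedralGroup.sr 1) x = x)
    (hcyc : Submodule.span (ZMod 2)
      (Set.range fun g : DihedralGroup (2 ^ (e + 1)) => ρ g x) = ⊤)
    (hdim : Module.finrank (ZMod 2) V = k) :
    Function.Injective ρ ↔ 2 ^ e < k := by
  have h2 : (2 : Module.End (ZMod 2) V) = 0 := by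
    ext v
    simpa using ZModModule.char_nsmul_eq_zero 2 v
  have hnil : IsNilpotent (ρ (r 1) - 1) :=
    ⟨2 ^ (e + 1), (pow_two_pow_eq_one_iff_sub_one_pow_eq_zero h2 _ _).1 <| by
      rw [← map_pow, r_one_pow_n, map_one]⟩
  rw [injective_iff_map_r_one_pow_ne_one he ρ, Ne, pow_two_pow_eq_one_iff_sub_one_pow_eq_zero h2,
    Module.End.pow_eq_zero_iff_finrank_le hnil (span_range_sub_one_pow_apply_eq_top ρ hx hcyc),
    hdim, not_le]
end

section
/- In the group algebra R = F₂[D], define α₀ = β₀ = 1 and recursively α_{j+1} = β_j·(g₁ − 1) and β_{j+1} = α_j·(g₂ − 1), so that α_j and β_j are the alternating length-j products ⋯(g₁−1)(g₂−1)(g₁−1) and ⋯(g₂−1)(g₁−1)(g₂−1) respectively. Then the set {α_j : j ≥ 0} ∪ {β_j : j ≥ 0} spans R as an F₂-vector space. -/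
/-!
Each generator `gᵢ` is an involution, so in characteristic 2 we have `(gᵢ - 1)² = 0`.
Hence right multiplication by `g₁ - 1` sends `α₀` to `α₁`, `αⱼ₊₁ = βⱼ (g₁ - 1)` to `0` and `βⱼ` to
`αⱼ₊₁`, and symmetrically for `g₂ - 1`; so the span of the alternating products is stable under
right multiplication by `gᵢ = (gᵢ - 1) + 1`. It contains `1`, and `g₁, g₂` generate `D` as a monoid,
so it contains every group element.
-/

namespace DihedralGroup

theorem mclosure_sr_zero_sr_one_eq_top {n : ℕ} [NeZero n] :
    Submonoid.closure {sr 0, sr 1} = (⊤ : Submonoid (DihedralGroup n)) := by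
  set M := Submonoid.closure {(sr 0 : DihedralGroup n), sr 1}
  have hsr0 : sr 0 ∈ M := Submonoid.subset_closure (by simp)
  have hr : ∀ k : ℕ, r (k : ZMod n) ∈ M := fun k => by
    rw [← r_one_pow, show (r 1 : DihedralGroup n) = sr 0 * sr 1 by simp [sr_mul_sr]]
    exact pow_mem (mul_mem hsr0 (Submonoid.subset_closure (by simp))) k
  refine eq_top_iff.2 fun g _ => ?_
  rcases g with i | i <;> obtain ⟨k, rfl⟩ := ZMod.natCast_zmod_surjective i
  · exact hr k
  · rw [← zero_add (k : ZMod n), ← sr_mul_r]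
    exact mul_mem hsr0 (hr k)

end DihedralGroup

theorem CharTwo.sub_one_mul_self_eq_zero {R : Type*} [Ring R] [CharP R 2] {x : R}
    (hx : x * x = 1) : (x - 1) * (x - 1) = 0 := by
  rw [CharTwo.sub_eq_add, add_mul, mul_add, mul_add, hx]
  grind [CharTwo.add_self_eq_zero]

theorem MonoidAlgebra.submodule_eq_top_of_mul_of_mem {k G : Type*} [Semiring k] [Monoid G]
    {S : Submodule k (MonoidAlgebra k G)} (hS : 1 ∈ S) {s : Set G}
    (hs : Submonoid.closure s = ⊤) (hmul : ∀ g ∈ s, ∀ x ∈ S, x * of k G g ∈ S) : S = ⊤ := by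
  let M : Submonoid G :=
    { carrier := {g | ∀ x ∈ S, x * of k G g ∈ S}
      one_mem' := fun x hx => by rwa [map_one, mul_one]
      mul_mem' := fun ha hb x hx => by rw [map_mul, ← mul_assoc]; exact hb _ (ha x hx) }
  have hof : ∀ g, of k G g ∈ S := fun g => by
    simpa using ((hs ▸ Submonoid.closure_le.2 hmul : ⊤ ≤ M) trivial) 1 hS
  refine eq_top_iff.2 fun x _ => ?_
  induction x using MonoidAlgebra.induction_linear with
  | zero => exact S.zero_mem
  | add y z hy hz => exact S.add_mem (hy trivial) (hz trivial)
  | single g r => simpa [smul_single'] using S.smul_mem r (hof g)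

theorem mul_mem_span_alternating {K A : Type*} [CommSemiring K] [Semiring A] [Algebra K A]
    {α β : ℕ → A} {u : A} (hu : u * u = 0) (h0 : α 0 = β 0) (hα : ∀ j, α (j + 1) = β j * u)
    {x : A} (hx : x ∈ Submodule.span K (Set.range α ∪ Set.range β)) :
    x * u ∈ Submodule.span K (Set.range α ∪ Set.range β) := by
  set S := Submodule.span K (Set.range α ∪ Set.range β)
  have hα_mem : ∀ j, α j ∈ S := fun j => Submodule.subset_span (Or.inl ⟨j, rfl⟩)
  refine (Submodule.span_le.2 ?_ : S ≤ S.comap (LinearMap.mulRight K u)) hx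
  rintro _ (⟨j | j, rfl⟩ | ⟨j, rfl⟩)
  · simpa [h0, ← hα] using hα_mem 1
  · simp [hα, mul_assoc, hu]
  · simpa [← hα] using hα_mem (j + 1)

theorem alternating_products_span_general (e : ℕ)
    (α β : ℕ → MonoidAlgebra (ZMod 2) (DihedralGroup (2 ^ (e + 1))))
    (hα0 : α 0 = 1) (hβ0 : β 0 = 1)
    (hα : ∀ j, α (j + 1) =
      β j * (MonoidAlgebra.of (ZMod 2) (DihedralGroup (2 ^ (e + 1)))
        (DihedralGroup.sr 0) - 1))
    (hβ : ∀ j, β (j + 1) =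
      α j * (MonoidAlgebra.of (ZMod 2) (DihedralGroup (2 ^ (e + 1)))
        (DihedralGroup.sr 1) - 1)) :
    Submodule.span (ZMod 2) (Set.range α ∪ Set.range β) = ⊤ := by
  set of := MonoidAlgebra.of (ZMod 2) (DihedralGroup (2 ^ (e + 1)))
  have : CharP (MonoidAlgebra (ZMod 2) (DihedralGroup (2 ^ (e + 1)))) 2 :=
    charP_of_injective_algebraMap' (ZMod 2) 2
  have hsq : ∀ i, (of (.sr i) - 1) * (of (.sr i) - 1) = 0 := fun i =>
    CharTwo.sub_one_mul_self_eq_zero (by rw [← map_mul, DihedralGroup.sr_mul_self, map_one])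
  have h0 : α 0 = β 0 := hα0.trans hβ0.symm
  refine MonoidAlgebra.submodule_eq_top_of_mul_of_mem (Submodule.subset_span (Or.inl ⟨0, hα0⟩))
    DihedralGroup.mclosure_sr_zero_sr_one_eq_top fun g hg x hx => ?_
  rw [← sub_add_cancel (of g) 1, mul_add, mul_one]
  refine add_mem ?_ hx
  rcases hg with rfl | rfl
  · exact mul_mem_span_alternating (hsq 0) h0 hα hx
  · rw [Set.union_comm] at hx ⊢
    exact mul_mem_span_alternating (hsq 1) h0.symm hβ hx

/-- In the group algebra `R = F₂[D]` of the dihedral group `D` of order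
`2^(e+2)` (with `g₁ = sr 0`, `g₂ = sr 1`), define `α₀ = β₀ = 1` and recursively
`α_{j+1} = β_j (g₁ - 1)`, `β_{j+1} = α_j (g₂ - 1)`.  Then
`{α_j : j ≥ 0} ∪ {β_j : j ≥ 0}` spans `R` as an `F₂`-vector space. -/
theorem alternating_products_span (e : ℕ) (he : 1 ≤ e)
    (α β : ℕ → MonoidAlgebra (ZMod 2) (DihedralGroup (2 ^ (e + 1))))
    (hα0 : α 0 = 1) (hβ0 : β 0 = 1)
    (hα : ∀ j, α (j + 1) =
      β j * (MonoidAlgebra.of (ZMod 2) (DihedralGroup (2 ^ (e + 1)))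
        (DihedralGroup.sr 0) - 1))
    (hβ : ∀ j, β (j + 1) =
      α j * (MonoidAlgebra.of (ZMod 2) (DihedralGroup (2 ^ (e + 1)))
        (DihedralGroup.sr 1) - 1)) :
    Submodule.span (ZMod 2) (Set.range α ∪ Set.range β) = ⊤ :=
  alternating_products_span_general e α β hα0 hβ0 hα hβ
end

section
/- Let G be a finite 2-group generated by two involutions g₁, g₂, and let V be a finite-dimensional F₂[G]-module that is cyclic, generated by a nonzero vector x ∈ V with g₂·x = x. Define w₀ = x and, for j ≥ 0, w_{j+1} = (g₁ − 1)·w_j if j is even and w_{j+1} = (g₂ − 1)·w_j if j is odd. Let r ≥ 1 be minimal with w_r = 0 (such r exists since the augmentation ideal of F₂[G] is nilpotent). Then w₀, w₁, …, w_{r−1} form an F₂-basis of V; in particular dim_{F₂} V = r. -/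
/-! In characteristic 2 the sequence `w` alternates between vectors fixed by `g₂` (even `j`) and
by `g₁` (odd `j`), so both recursion steps agree with `T = ρ g₁ + ρ g₂` and `w j = T ^ j x`.
As `T ^ r x = 0` while `T ^ i x ≠ 0` for `i < r`, the vectors `x, T x, …, T ^ (r - 1) x` are
linearly independent. Their span contains `g w_j ∈ {w_j, w_{j+1} + w_j}` for both generators `g`,
so it is `G`-stable; it contains `x`, hence it is all of `V`. -/

theorem CharTwo.sub_eq_add_of_module (R : Type*) {M : Type*} [Ring R] [CharP R 2]
    [AddCommGroup M] [Module R M] (u v : M) : u - v = u + v := by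
  rw [sub_eq_add_neg, ← neg_one_smul R v, CharTwo.neg_eq, one_smul]

namespace Module.End

theorem pow_apply_eq_zero_of_le {R M : Type*} [Semiring R] [AddCommMonoid M] [Module R M]
    {f : End R M} {v : M} {r n : ℕ} (hr : (f ^ r) v = 0)
    (hn : r ≤ n) : (f ^ n) v = 0 := by
  rw [← Nat.sub_add_cancel hn, pow_add, mul_apply, hr, map_zero]

theorem linearIndependent_pow_apply {K M : Type*} [DivisionRing K] [AddCommGroup M] [Module K M]
    {f : End K M} {v : M} {r : ℕ} (hr : (f ^ r) v = 0)
    (hv : ∀ i < r, (f ^ i) v ≠ 0) : LinearIndependent K fun i : Fin r => (f ^ (i : ℕ)) v := by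
  rw [Fintype.linearIndependent_iff]
  intro c hc i
  induction i using WellFoundedLT.induction with
  | _ i ih =>
  have hi : (i : ℕ) < r := i.isLt
  -- applying `f ^ (r - 1 - i)` kills every term but the `i`-th one
  have hsum := congrArg (f ^ (r - 1 - (i : ℕ))) hc
  rw [map_sum, map_zero, Finset.sum_eq_single i] at hsum
  · rw [map_smul, ← mul_apply, ← pow_add, show r - 1 - (i : ℕ) + i = r - 1 by omega] at hsum
    exact (smul_eq_zero.mp hsum).resolve_right (hv (r - 1) (by omega))
  · intro j _ hji
    rcases lt_or_gt_of_ne hji with hlt | hgt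
    · rw [ih j hlt, zero_smul, map_zero]
    · rw [map_smul, ← mul_apply, ← pow_add, pow_apply_eq_zero_of_le hr (by omega), smul_zero]
  · simp

end Module.End

namespace Representation

variable {k G V : Type*} [CommRing k] [AddCommGroup V] [Module k V]

section Monoid

variable [Monoid G] (ρ : Representation k G V)

theorem apply_apply_of_mul_self_eq_one {g : G} (hg : g * g = 1) (v : V) : ρ g (ρ g v) = v := by
  rw [← Module.End.mul_apply, ← map_mul, hg, map_one, Module.End.one_apply]

theorem apply_sub_self_of_mul_self_eq_one [CharP k 2] {g : G} (hg : g * g = 1) (v : V) :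
    ρ g (ρ g v - v) = ρ g v - v := by
  rw [map_sub, ρ.apply_apply_of_mul_self_eq_one hg, CharTwo.sub_eq_add_of_module k,
    CharTwo.sub_eq_add_of_module k, add_comm]

theorem eq_top_of_forall_le_comap {x : V}
    (hx : Submodule.span k (Set.range fun g : G => ρ g x) = ⊤) {W : Submodule k V}
    (hW : ∀ g, W ≤ W.comap (ρ g)) (hxW : x ∈ W) : W = ⊤ := by
  rw [eq_top_iff, ← hx, Submodule.span_le]
  rintro _ ⟨g, rfl⟩
  exact hW g hxW

def IsAlternatingSeq (g₁ g₂ : G) (w : ℕ → V) : Prop :=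
  ∀ j, w (j + 1) = if Even j then ρ g₁ (w j) - w j else ρ g₂ (w j) - w j

end Monoid

theorem le_comap_of_closure_eq_top [Group G] (ρ : Representation k G V) {S : Set G}
    (hS : Subgroup.closure S = ⊤) {W : Submodule k V} (hW : ∀ s ∈ S, W ≤ W.comap (ρ s))
    (hW' : ∀ s ∈ S, W ≤ W.comap (ρ s⁻¹)) (g : G) : W ≤ W.comap (ρ g) := by
  have hg : g ∈ Subgroup.closure S := hS ▸ Subgroup.mem_top g
  induction hg using Subgroup.closure_induction'' with
  | mem s hs => exact hW s hs
  | inv_mem s hs => exact hW' s hs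
  | one => rw [map_one, Module.End.one_eq_id, Submodule.comap_id]
  | mul x y _ _ hx hy =>
    rw [map_mul, Module.End.mul_eq_comp, Submodule.comap_comp]
    exact hy.trans (Submodule.comap_mono hx)

namespace IsAlternatingSeq

section Monoid

variable [CharP k 2] [Monoid G] {ρ : Representation k G V} {g₁ g₂ : G} {w : ℕ → V}

theorem apply_of_odd (hw : ρ.IsAlternatingSeq g₁ g₂ w) (hg₁ : g₁ * g₁ = 1) {j : ℕ}
    (hj : Odd j) : ρ g₁ (w j) = w j := by
  obtain ⟨i, rfl⟩ := hj
  rw [hw, if_pos (even_two_mul i), ρ.apply_sub_self_of_mul_self_eq_one hg₁]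

theorem apply_of_even (hw : ρ.IsAlternatingSeq g₁ g₂ w) (hg₂ : g₂ * g₂ = 1)
    (h₀ : ρ g₂ (w 0) = w 0) {j : ℕ} (hj : Even j) : ρ g₂ (w j) = w j := by
  rcases j with _ | i
  · exact h₀
  · rw [hw, if_neg (by simpa [Nat.even_add_one] using hj),
      ρ.apply_sub_self_of_mul_self_eq_one hg₂]

theorem apply_eq_or (hw : ρ.IsAlternatingSeq g₁ g₂ w) (hg₁ : g₁ * g₁ = 1) (hg₂ : g₂ * g₂ = 1)
    (h₀ : ρ g₂ (w 0) = w 0) {s : G} (hs : s = g₁ ∨ s = g₂) (j : ℕ) :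
    ρ s (w j) = w j ∨ ρ s (w j) = w (j + 1) + w j := by
  rcases Nat.even_or_odd j with hj | hj
  · rcases hs with rfl | rfl
    · exact .inr (by rw [hw, if_pos hj, sub_add_cancel])
    · exact .inl (hw.apply_of_even hg₂ h₀ hj)
  · rcases hs with rfl | rfl
    · exact .inl (hw.apply_of_odd hg₁ hj)
    · exact .inr (by rw [hw, if_neg (Nat.not_even_iff_odd.mpr hj), sub_add_cancel])

theorem succ_eq (hw : ρ.IsAlternatingSeq g₁ g₂ w) (hg₁ : g₁ * g₁ = 1) (hg₂ : g₂ * g₂ = 1)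
    (h₀ : ρ g₂ (w 0) = w 0) (j : ℕ) : w (j + 1) = (ρ g₁ + ρ g₂) (w j) := by
  rw [LinearMap.add_apply]
  rcases Nat.even_or_odd j with hj | hj
  · rw [hw, if_pos hj, hw.apply_of_even hg₂ h₀ hj, CharTwo.sub_eq_add_of_module k]
  · rw [hw, if_neg (Nat.not_even_iff_odd.mpr hj), hw.apply_of_odd hg₁ hj,
      CharTwo.sub_eq_add_of_module k, add_comm]

theorem eq_pow_apply (hw : ρ.IsAlternatingSeq g₁ g₂ w) (hg₁ : g₁ * g₁ = 1) (hg₂ : g₂ * g₂ = 1)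
    (h₀ : ρ g₂ (w 0) = w 0) (j : ℕ) : w j = ((ρ g₁ + ρ g₂) ^ j) (w 0) := by
  induction j with
  | zero => rfl
  | succ j ih => rw [hw.succ_eq hg₁ hg₂ h₀, ih, pow_succ', Module.End.mul_apply]

end Monoid

theorem span_eq_top [CharP k 2] [Group G] {ρ : Representation k G V} {g₁ g₂ : G} {w : ℕ → V}
    (hw : ρ.IsAlternatingSeq g₁ g₂ w) (hg₁ : g₁ * g₁ = 1) (hg₂ : g₂ * g₂ = 1)
    (h₀ : ρ g₂ (w 0) = w 0) (hgen : Subgroup.closure {g₁, g₂} = ⊤)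
    (hcyc : Submodule.span k (Set.range fun g : G => ρ g (w 0)) = ⊤) {r : ℕ} (hr : w r = 0) :
    Submodule.span k (Set.range fun i : Fin r => w i) = ⊤ := by
  set W := Submodule.span k (Set.range fun i : Fin r => w i)
  have hpow := hw.eq_pow_apply hg₁ hg₂ h₀
  have hwW (j : ℕ) : w j ∈ W := by
    by_cases hj : j < r
    · exact Submodule.subset_span ⟨⟨j, hj⟩, rfl⟩
    · rw [hpow, Module.End.pow_apply_eq_zero_of_le (hpow r ▸ hr) (not_lt.mp hj)]
      exact W.zero_mem
  have hgens : ∀ s ∈ ({g₁, g₂} : Set G), W ≤ W.comap (ρ s) := by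
    intro s hs
    rw [Submodule.span_le]
    rintro _ ⟨i, rfl⟩
    rcases hw.apply_eq_or hg₁ hg₂ h₀ hs i with h | h
    all_goals rw [SetLike.mem_coe, Submodule.mem_comap, h]
    · exact hwW i
    · exact W.add_mem (hwW _) (hwW _)
  have hinv : ∀ s ∈ ({g₁, g₂} : Set G), s⁻¹ = s := by
    rintro s (rfl | rfl)
    exacts [inv_eq_of_mul_eq_one_right hg₁, inv_eq_of_mul_eq_one_right hg₂]
  exact ρ.eq_top_of_forall_le_comap hcyc
    (ρ.le_comap_of_closure_eq_top hgen hgens fun s hs => by rw [hinv s hs]; exact hgens s hs)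
    (hwW 0)

theorem linearIndependent {k G V : Type*} [Field k] [CharP k 2] [Monoid G] [AddCommGroup V]
    [Module k V] {ρ : Representation k G V} {g₁ g₂ : G} {w : ℕ → V}
    (hw : ρ.IsAlternatingSeq g₁ g₂ w) (hg₁ : g₁ * g₁ = 1) (hg₂ : g₂ * g₂ = 1)
    (h₀ : ρ g₂ (w 0) = w 0) {r : ℕ} (hr : w r = 0) (hrmin : ∀ i < r, w i ≠ 0) :
    LinearIndependent k fun i : Fin r => w i := by
  have hpow := hw.eq_pow_apply hg₁ hg₂ h₀
  rw [show (fun i : Fin r => w i) = fun i : Fin r => ((ρ g₁ + ρ g₂) ^ (i : ℕ)) (w 0) from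
    funext fun i => hpow i]
  exact Module.End.linearIndependent_pow_apply (hpow r ▸ hr) fun i hi => hpow i ▸ hrmin i hi

end IsAlternatingSeq

end Representation

theorem cyclic_module_basis_general (G : Type) [Group G]
    (g₁ g₂ : G)
    (hg₁ : g₁ * g₁ = 1)
    (hg₂ : g₂ * g₂ = 1)
    (hgen : Subgroup.closure {g₁, g₂} = ⊤)
    (V : Type) [AddCommGroup V] [Module (ZMod 2) V]
    (ρ : Representation (ZMod 2) G V)
    (x : V)
    (hfix : ρ g₂ x = x)
    (hcyc : Submodule.span (ZMod 2) (Set.range fun g : G => ρ g x) = ⊤)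
    (w : ℕ → V) (hw0 : w 0 = x)
    (hw : ∀ j, w (j + 1) = if Even j then ρ g₁ (w j) - w j else ρ g₂ (w j) - w j)
    (r : ℕ) (hr : w r = 0) (hrmin : ∀ i < r, w i ≠ 0) :
    (∃ b : Module.Basis (Fin r) (ZMod 2) V, ∀ i : Fin r, b i = w i) ∧
      Module.finrank (ZMod 2) V = r := by
  subst hw0
  have hw : ρ.IsAlternatingSeq g₁ g₂ w := hw
  have hind := hw.linearIndependent hg₁ hg₂ hfix hr hrmin
  have hspan := hw.span_eq_top hg₁ hg₂ hfix hgen hcyc hr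
  let b := Module.Basis.mk hind hspan.ge
  refine ⟨⟨b, Module.Basis.mk_apply hind _⟩, ?_⟩
  rw [Module.finrank_eq_card_basis b, Fintype.card_fin]

/-- Let `G` be a finite 2-group generated by two involutions `g₁, g₂`
and let `V` be a finite-dimensional `F₂[G]`-module, cyclic, generated by a nonzero
vector `x` with `g₂ · x = x`.  Define `w₀ = x` and `w_{j+1} = (g₁ - 1)·w_j` for even `j`,
`w_{j+1} = (g₂ - 1)·w_j` for odd `j`.  If `r ≥ 1` is minimal with `w_r = 0`, then
`w₀, …, w_{r-1}` form an `F₂`-basis of `V`; in particular `dim_{F₂} V = r`. -/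
theorem cyclic_module_basis (G : Type) [Group G] [Finite G] (hG : IsPGroup 2 G)
    (g₁ g₂ : G)
    (hg₁ : g₁ * g₁ = 1) (hg₁' : g₁ ≠ 1)
    (hg₂ : g₂ * g₂ = 1) (hg₂' : g₂ ≠ 1)
    (hgen : Subgroup.closure {g₁, g₂} = ⊤)
    (V : Type) [AddCommGroup V] [Module (ZMod 2) V] [FiniteDimensional (ZMod 2) V]
    (ρ : Representation (ZMod 2) G V)
    (x : V) (hx : x ≠ 0)
    (hfix : ρ g₂ x = x)
    (hcyc : Submodule.span (ZMod 2) (Set.range fun g : G => ρ g x) = ⊤)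
    (w : ℕ → V) (hw0 : w 0 = x)
    (hw : ∀ j, w (j + 1) = if Even j then ρ g₁ (w j) - w j else ρ g₂ (w j) - w j)
    (r : ℕ) (hr1 : 1 ≤ r) (hr : w r = 0) (hrmin : ∀ i < r, w i ≠ 0) :
    (∃ b : Module.Basis (Fin r) (ZMod 2) V, ∀ i : Fin r, b i = w i) ∧
      Module.finrank (ZMod 2) V = r :=
  cyclic_module_basis_general G g₁ g₂ hg₁ hg₂ hgen V ρ x hfix hcyc w hw0 hw r hr hrmin
end

section
/- For every m ≥ 1 with 2^m ≤ k and every j with 1 ≤ j ≤ k, one has t^(2^m)(e_j) = e_j + t^(2^(m−1))(e_{j − 2^m}), where by convention e_i = 0 for i ≤ 0. -/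
/-- The `j`-th standard basis vector of `(ZMod 2)^k`, 1-indexed; by convention it is `0`
for `j = 0` (and for `j > k`). -/
def eVec (k j : ℕ) : Fin k → ZMod 2 := fun i => if (i : ℕ) + 1 = j then 1 else 0

/-- The involution `s₁`, defined on the standard basis by `s₁ e_j = e_j + e_{j-1}` if
`j ≡ k (mod 2)` and `s₁ e_j = e_j` otherwise. -/
noncomputable def sOne (k : ℕ) : Module.End (ZMod 2) (Fin k → ZMod 2) :=
  (Pi.basisFun (ZMod 2) (Fin k)).constr (ZMod 2) fun i =>
    if ((i : ℕ) + 1) % 2 = k % 2 then eVec k ((i : ℕ) + 1) + eVec k (i : ℕ)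
    else eVec k ((i : ℕ) + 1)

/-- The involution `s₂`, defined on the standard basis by `s₂ e_j = e_j + e_{j-1}` if
`j ≢ k (mod 2)` and `s₂ e_j = e_j` otherwise. -/
noncomputable def sTwo (k : ℕ) : Module.End (ZMod 2) (Fin k → ZMod 2) :=
  (Pi.basisFun (ZMod 2) (Fin k)).constr (ZMod 2) fun i =>
    if ((i : ℕ) + 1) % 2 ≠ k % 2 then eVec k ((i : ℕ) + 1) + eVec k (i : ℕ)
    else eVec k ((i : ℕ) + 1)

/-- `t = s₂ ∘ s₁`. -/
noncomputable def tEnd (k : ℕ) : Module.End (ZMod 2) (Fin k → ZMod 2) :=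
  sTwo k * sOne k


lemma eVec_zero (k : ℕ) : eVec k 0 = 0 := by
  funext i; simp [eVec]

lemma eVec_eq_basis (k j : ℕ) (h1 : 1 ≤ j) (h2 : j ≤ k) :
    eVec k j = Pi.basisFun (ZMod 2) (Fin k) ⟨j - 1, by omega⟩ := by
  funext i
  simp only [eVec, Pi.basisFun_apply]
  rcases eq_or_ne ((i : ℕ) + 1) j with h | h
  · rw [if_pos h, Pi.single_apply, if_pos]
    apply Fin.ext
    simp only [Fin.val_mk]
    omega
  · rw [if_neg h, Pi.single_apply, if_neg]
    intro hc; apply h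
    have : (i : ℕ) = j - 1 := congrArg Fin.val hc
    omega

lemma sOne_eVec (k j : ℕ) (h1 : 1 ≤ j) (h2 : j ≤ k) :
    sOne k (eVec k j) =
      if j % 2 = k % 2 then eVec k j + eVec k (j - 1) else eVec k j := by
  rw [eVec_eq_basis k j h1 h2, sOne, Module.Basis.constr_basis]
  have h : (j - 1) + 1 = j := by omega
  simp only [h]
  rw [← eVec_eq_basis k j h1 h2]

lemma sTwo_eVec (k j : ℕ) (h1 : 1 ≤ j) (h2 : j ≤ k) :
    sTwo k (eVec k j) =
      if j % 2 ≠ k % 2 then eVec k j + eVec k (j - 1) else eVec k j := by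
  rw [eVec_eq_basis k j h1 h2, sTwo, Module.Basis.constr_basis]
  have h : (j - 1) + 1 = j := by omega
  simp only [h]
  rw [← eVec_eq_basis k j h1 h2]

lemma tEnd_eVec (k j : ℕ) (h2 : j ≤ k) :
    tEnd k (eVec k j) =
      eVec k j + eVec k (j - 1) +
        (if j % 2 = k % 2 then eVec k (j - 2) else 0) := by
  rcases Nat.eq_zero_or_pos j with rfl | h1
  · simp [eVec_zero, map_zero]
  rw [tEnd, Module.End.mul_apply, sOne_eVec k j h1 h2]
  by_cases hp : j % 2 = k % 2
  · rw [if_pos hp, map_add, sTwo_eVec k j h1 h2, if_neg (by omega), if_pos hp]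
    rcases Nat.lt_or_ge j 2 with hj2 | hj2
    · interval_cases j
      · simp [eVec_zero, map_zero]
    · rw [sTwo_eVec k (j - 1) (by omega) (by omega), if_pos (by omega)]
      have : j - 1 - 1 = j - 2 := by omega
      rw [this]; abel
  · rw [if_neg hp, sTwo_eVec k j h1 h2, if_pos hp, if_neg hp, add_zero]

lemma add_self_vec (k : ℕ) (x : Fin k → ZMod 2) : x + x = 0 :=
  funext fun _ => CharTwo.add_self_eq_zero _

lemma two_smul_vec (k : ℕ) (x : Fin k → ZMod 2) : (2:ℕ) • x = 0 := by
  rw [two_nsmul]; exact add_self_vec k x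

lemma three_smul_vec (k : ℕ) (x : Fin k → ZMod 2) : (3:ℕ) • x = x := by
  rw [show (3:ℕ) = 2 + 1 from rfl, add_nsmul, two_smul_vec, one_nsmul, zero_add]

lemma key1 (k : ℕ) (a b c : Fin k → ZMod 2) : (a + b + c) + (b + c) = a := by
  have h : (a + b + c) + (b + c) = a + ((b + b) + (c + c)) := by abel
  rw [h, add_self_vec, add_self_vec, add_zero, add_zero]

lemma key2 (k : ℕ) (a b c d : Fin k → ZMod 2) :
    (a + b) + (b + c + d) = a + (c + d) := by
  have h : (a + b) + (b + c + d) = (a + (c + d)) + (b + b) := by abel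
  rw [h, add_self_vec, add_zero]

lemma tsq (k j : ℕ) (h2 : j ≤ k) :
    tEnd k (tEnd k (eVec k j)) = eVec k j + tEnd k (eVec k (j - 2)) := by
  rcases Nat.lt_or_ge j 3 with hj | hj
  · interval_cases j
    · simp [eVec_zero]
    · rw [tEnd_eVec k 1 (by omega)]
      simp only [show (1:ℕ) - 1 = 0 from rfl, show (1:ℕ) - 2 = 0 from rfl,
        eVec_zero, ite_self, add_zero, map_zero]
      rw [tEnd_eVec k 1 (by omega)]
      simp only [show (1:ℕ) - 1 = 0 from rfl, show (1:ℕ) - 2 = 0 from rfl,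
        eVec_zero, ite_self, add_zero]
    · rw [tEnd_eVec k 2 (by omega)]
      simp only [show (2:ℕ) - 1 = 1 from rfl, show (2:ℕ) - 2 = 0 from rfl,
        eVec_zero, ite_self, add_zero, map_zero, map_add]
      rw [tEnd_eVec k 2 (by omega), tEnd_eVec k 1 (by omega)]
      simp only [show (2:ℕ) - 1 = 1 from rfl, show (2:ℕ) - 2 = 0 from rfl,
        show (1:ℕ) - 1 = 0 from rfl, show (1:ℕ) - 2 = 0 from rfl,
        eVec_zero, ite_self, add_zero]
      rw [add_assoc, add_self_vec, add_zero]
  · rw [tEnd_eVec k j h2]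
    by_cases hp : j % 2 = k % 2
    · rw [if_pos hp, map_add, map_add,
        tEnd_eVec k j h2, if_pos hp,
        tEnd_eVec k (j - 1) (by omega), if_neg (by omega),
        tEnd_eVec k (j - 2) (by omega), if_pos (by omega)]
      have e1 : j - 1 - 1 = j - 2 := by omega
      rw [e1, add_zero, key1]
    · rw [if_neg hp, add_zero, map_add,
        tEnd_eVec k j h2, if_neg hp,
        tEnd_eVec k (j - 1) (by omega), if_pos (by omega),
        tEnd_eVec k (j - 2) (by omega), if_neg (by omega)]
      have e1 : j - 1 - 1 = j - 2 := by omega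
      have e2 : j - 1 - 2 = j - 2 - 1 := by omega
      rw [e1, e2, add_zero, add_zero, key2]

lemma key3 (k : ℕ) (a b x : Fin k → ZMod 2) : a + b + (b + x) = a + x := by
  have h : a + b + (b + x) = (a + x) + (b + b) := by abel
  rw [h, add_self_vec, add_zero]

lemma main_ind (k m : ℕ) (hm : 1 ≤ m) : ∀ j, j ≤ k →
    (tEnd k ^ 2 ^ m) (eVec k j) =
      eVec k j + (tEnd k ^ 2 ^ (m - 1)) (eVec k (j - 2 ^ m)) := by
  induction m, hm using Nat.le_induction with
  | base =>
    intro j hj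
    have h2 : (2:ℕ) ^ 1 = 2 := by norm_num
    have h0 : (2:ℕ) ^ (1 - 1) = 1 := by norm_num
    rw [h2, h0, pow_one, pow_two, Module.End.mul_apply]
    exact tsq k j hj
  | succ m hm ih =>
    intro j hj
    have epow : 2 ^ m + 2 ^ m = 2 ^ (m + 1) := by
      rw [← two_mul, ← pow_succ']
    have epow' : 2 ^ (m - 1) + 2 ^ (m - 1) = 2 ^ m := by
      rw [← two_mul, ← pow_succ']
      congr 1
      omega
    have hA : tEnd k ^ 2 ^ (m + 1) = (tEnd k ^ 2 ^ m) * (tEnd k ^ 2 ^ m) := by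
      rw [← pow_add, epow]
    have hB : (tEnd k ^ 2 ^ (m - 1)) * (tEnd k ^ 2 ^ (m - 1)) = tEnd k ^ 2 ^ m := by
      rw [← pow_add, epow']
    have hcomm : (tEnd k ^ 2 ^ m) * (tEnd k ^ 2 ^ (m - 1)) =
        (tEnd k ^ 2 ^ (m - 1)) * (tEnd k ^ 2 ^ m) := by
      rw [← pow_add, ← pow_add, Nat.add_comm]
    have hj' : j - 2 ^ m ≤ k := le_trans (Nat.sub_le _ _) hj
    have hsub : j - 2 ^ m - 2 ^ m = j - 2 ^ (m + 1) := by
      rw [Nat.sub_sub, epow]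
    have ih2 := ih (j - 2 ^ m) hj'
    rw [Nat.add_sub_cancel, hA, Module.End.mul_apply, ih j hj, map_add, ih j hj,
      ← Module.End.mul_apply, hcomm, Module.End.mul_apply, ih2, map_add,
      ← Module.End.mul_apply, hB, hsub, key3]


/-- For `m ≥ 1` with `2^m ≤ k` and `1 ≤ j ≤ k`,
`t^(2^m)(e_j) = e_j + t^(2^(m-1))(e_{j - 2^m})` (with `e_i = 0` for `i ≤ 0`, encoded by
truncated subtraction in `ℕ` and `eVec k 0 = 0`). -/
theorem tpow_apply_eVec (k m j : ℕ) (hk : 1 ≤ k) (hm : 1 ≤ m) (hmk : 2 ^ m ≤ k)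
    (hj1 : 1 ≤ j) (hjk : j ≤ k) :
    (tEnd k ^ 2 ^ m) (eVec k j) =
      eVec k j + (tEnd k ^ 2 ^ (m - 1)) (eVec k (j - 2 ^ m)) :=
  main_ind k m hm j hjk
end

section
/- One has (t − 1)^(k−1)(e_k) = e₁ (in particular (t − 1)^(k−1) ≠ 0) and (t − 1)^k = 0, so k is the nilpotency index of t − 1. Consequently, if k ≥ 2 then the multiplicative order of t equals 2^(a+1), where a is the unique natural number with 2^a < k ≤ 2^(a+1). -/
lemma eVec_eq_basis_s8 (k : ℕ) (i : Fin k) :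
    eVec k ((i : ℕ) + 1) = Pi.basisFun (ZMod 2) (Fin k) i := by
  funext i'
  simp [eVec, Pi.basisFun_apply, Pi.single_apply, Fin.val_eq_val, eq_comm]

lemma N_eVec (k j : ℕ) (h1 : 1 ≤ j) (h2 : j ≤ k) :
    (tEnd k - 1) (eVec k j) =
      eVec k (j - 1) + if j % 2 = k % 2 then eVec k (j - 2) else 0 := by
  have ht : (tEnd k - 1) (eVec k j) = sTwo k (sOne k (eVec k j)) - eVec k j := by
    simp [tEnd, LinearMap.sub_apply, Module.End.mul_apply]
  rw [ht, sOne_eVec k j h1 h2]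
  by_cases hp : j % 2 = k % 2
  · rw [if_pos hp, map_add, sTwo_eVec k j h1 h2, if_neg (by simp [hp])]
    rcases Nat.lt_or_ge j 2 with hj2 | hj2
    · have : j = 1 := by omega
      subst this
      rw [eVec_zero, map_zero]
      simp [hp, eVec_zero]
    · have h1' : 1 ≤ j - 1 := by omega
      have h2' : j - 1 ≤ k := by omega
      rw [sTwo_eVec k (j-1) h1' h2', if_pos (by omega)]
      have : j - 1 - 1 = j - 2 := by omega
      rw [this, if_pos hp]
      abel
  · rw [if_neg hp, sTwo_eVec k j h1 h2, if_pos hp, if_neg hp]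
    abel

lemma Npow_eVec_zero (k : ℕ) : ∀ m j, j ≤ m → j ≤ k →
    ((tEnd k - 1) ^ m) (eVec k j) = 0 := by
  intro m
  induction m with
  | zero => intro j hj _; interval_cases j; simp [eVec_zero]
  | succ m ih =>
    intro j hj hjk
    rcases Nat.eq_zero_or_pos j with h0 | h1
    · subst h0; simp [eVec_zero]
    · rw [pow_succ, Module.End.mul_apply, N_eVec k j h1 hjk, map_add]
      rw [ih (j-1) (by omega) (by omega)]
      split_ifs with h
      · rw [ih (j-2) (by omega) (by omega)]; simp
      · simp

lemma Npow_eVec_top (k : ℕ) (hk : 1 ≤ k) : ∀ m, m ≤ k - 1 →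
    ∃ v, ((tEnd k - 1) ^ m) (eVec k k) = eVec k (k - m) + v ∧
      ((tEnd k - 1) ^ (k - 1 - m)) v = 0 := by
  intro m
  induction m with
  | zero => exact fun _ => ⟨0, by simp, by simp⟩
  | succ m ih =>
    intro hm
    obtain ⟨v, hv, hv0⟩ := ih (by omega)
    refine ⟨(if (k - m) % 2 = k % 2 then eVec k (k - m - 2) else 0) + (tEnd k - 1) v, ?_, ?_⟩
    · rw [pow_succ', Module.End.mul_apply, hv, map_add, N_eVec k (k - m) (by omega) (by omega)]
      have : k - m - 1 = k - (m + 1) := by omega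
      rw [this]; abel
    · rw [map_add]
      have h1 : ((tEnd k - 1) ^ (k - 1 - (m + 1)))
          (if (k - m) % 2 = k % 2 then eVec k (k - m - 2) else 0) = 0 := by
        split_ifs with h
        · exact Npow_eVec_zero k _ _ (by omega) (by omega)
        · simp
      have h2 : ((tEnd k - 1) ^ (k - 1 - (m + 1))) ((tEnd k - 1) v) = 0 := by
        have h3 : ((tEnd k - 1) ^ (k - 1 - (m + 1)) * (tEnd k - 1)) v = 0 := by
          rw [← pow_succ]
          have : k - 1 - (m+1) + 1 = k - 1 - m := by omega
          rw [this]; exact hv0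
        simpa [Module.End.mul_apply] using h3
      rw [h1, h2, add_zero]

lemma Npow_k (k : ℕ) : (tEnd k - 1) ^ k = 0 := by
  apply (Pi.basisFun (ZMod 2) (Fin k)).ext
  intro i
  rw [← eVec_eq_basis_s8]
  rw [Npow_eVec_zero k k ((i : ℕ) + 1) i.isLt (by omega)]
  simp

lemma Npow_top_eq (k : ℕ) (hk : 1 ≤ k) :
    ((tEnd k - 1) ^ (k - 1)) (eVec k k) = eVec k 1 := by
  obtain ⟨v, hv, hv0⟩ := Npow_eVec_top k hk (k - 1) le_rfl
  have : k - (k - 1) = 1 := by omega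
  rw [this] at hv
  simp at hv0
  rw [hv, hv0, add_zero]

lemma tpow_two_pow (k : ℕ) (n : ℕ) :
    (tEnd k) ^ (2 ^ n) = 1 + (tEnd k - 1) ^ (2 ^ n) := by
  have hx : ∀ x : Module.End (ZMod 2) (Fin k → ZMod 2), x + x = 0 := by
    intro x
    rw [← two_smul (ZMod 2) x]
    have : (2 : ZMod 2) = 0 := by decide
    rw [this, zero_smul]
  induction n with
  | zero => simp
  | succ n ih =>
    have h2 : 2 ^ (n + 1) = 2 ^ n * 2 := by ring
    rw [h2, pow_mul, ih]
    set x := (tEnd k - 1) ^ (2 ^ n) with hxdef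
    have : (1 + x) ^ 2 = 1 + x * x + (x + x) := by noncomm_ring
    rw [this, hx x, add_zero, ← pow_two, ← pow_mul, ← h2]

/-- `(t - 1)^(k-1)(e_k) = e₁` (in particular `(t-1)^(k-1) ≠ 0`) and
`(t - 1)^k = 0`, so `k` is the nilpotency index of `t - 1`.  Consequently, if `k ≥ 2`
then the multiplicative order of `t` is `2^(a+1)`, where `a` is the unique natural
number with `2^a < k ≤ 2^(a+1)`. -/
theorem t_sub_one_nilpotency_index (k : ℕ) (hk : 1 ≤ k) :
    ((tEnd k - 1) ^ (k - 1)) (eVec k k) = eVec k 1 ∧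
    (tEnd k - 1) ^ (k - 1) ≠ 0 ∧
    (tEnd k - 1) ^ k = 0 ∧
    (∀ a : ℕ, 2 ≤ k → 2 ^ a < k → k ≤ 2 ^ (a + 1) →
      orderOf (tEnd k) = 2 ^ (a + 1)) := by
  have part1 := Npow_top_eq k hk
  have hN_ge : ∀ m, k ≤ m → (tEnd k - 1) ^ m = 0 := by
    intro m hm
    have : m = k + (m - k) := by omega
    rw [this, pow_add, Npow_k, zero_mul]
  have part2 : (tEnd k - 1) ^ (k - 1) ≠ 0 := by
    intro h
    rw [h] at part1
    have h1 : eVec k 1 ⟨0, hk⟩ = 1 := by simp [eVec]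
    rw [← part1] at h1
    simp at h1
  refine ⟨part1, part2, Npow_k k, ?_⟩
  intro a _ hlt hle
  have hone : (tEnd k) ^ (2 ^ (a + 1)) = 1 := by
    rw [tpow_two_pow, hN_ge _ hle, add_zero]
  have hdvd : orderOf (tEnd k) ∣ 2 ^ (a + 1) := orderOf_dvd_of_pow_eq_one hone
  obtain ⟨b, hb, hob⟩ := (Nat.dvd_prime_pow Nat.prime_two).mp hdvd
  rcases Nat.lt_or_ge b (a + 1) with hba | hba
  · exfalso
    have hdvd2 : orderOf (tEnd k) ∣ 2 ^ a := by
      rw [hob]; exact pow_dvd_pow 2 (by omega)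
    have ht : (tEnd k) ^ (2 ^ a) = 1 := orderOf_dvd_iff_pow_eq_one.mp hdvd2
    rw [tpow_two_pow] at ht
    have hN0 : (tEnd k - 1) ^ (2 ^ a) = 0 := by
      have := ht.symm
      rwa [left_eq_add] at this
    have : (tEnd k - 1) ^ (k - 1) = 0 := by
      have heq : k - 1 = 2 ^ a + (k - 1 - 2 ^ a) := by omega
      rw [heq, pow_add, hN0, zero_mul]
    exact part2 this
  · rw [hob]
    congr 1
    omega
end

section
/- Assume k is even. Then the kernel of s₁ − 1 equals the range of s₁ − 1, and both equal the F₂-span of the odd-indexed basis vectors {e_j : 1 ≤ j ≤ k, j odd}; in particular each has F₂-dimension k/2. -/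
/-! For even `k`, `s₁ - 1` sends `e_j` to `e_{j-1}` for even `j` and kills `e_j` for odd `j`;
in coordinates it moves each even-indexed coordinate one step down and zeroes the rest. Hence
its kernel and its range are both the vectors supported on the odd-indexed coordinates, and
rank–nullity with `ker = range` gives dimension `k / 2`.

The coordinate `i : Fin k` carries `e_{i+1}`, so "odd index `j`" reads `Even (i : ℕ)` below. -/

theorem eVec_succ {k : ℕ} (i : Fin k) : eVec k (i + 1) = Pi.single i 1 := by
  ext m
  simp [eVec, Pi.single_apply, Fin.ext_iff, eq_comm]

theorem sOne_sub_one_apply {k : ℕ} (v : Fin k → ZMod 2) (m : Fin k) :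
    (sOne k - 1) v m =
      if h : (m : ℕ) % 2 = k % 2 ∧ (m : ℕ) + 1 < k then v ⟨m + 1, h.2⟩ else 0 := by
  suffices LinearMap.proj m ∘ₗ (sOne k - 1) =
      if h : (m : ℕ) % 2 = k % 2 ∧ (m : ℕ) + 1 < k then LinearMap.proj ⟨m + 1, h.2⟩ else 0 by
    have := LinearMap.congr_fun this v
    split_ifs at this ⊢ <;> simpa using this
  refine (Pi.basisFun (ZMod 2) (Fin k)).ext fun i => ?_
  simp only [sOne, LinearMap.comp_apply, LinearMap.sub_apply, Module.Basis.constr_basis]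
  split_ifs <;> simp [eVec, Pi.single_apply, Fin.ext_iff] <;> omega

section

variable {k : ℕ} (hk : Even k)
include hk

theorem sOne_sub_one_apply_of_odd (v : Fin k → ZMod 2) {m : Fin k} (hm : Odd (m : ℕ)) :
    (sOne k - 1) v m = 0 := by
  rw [Nat.even_iff] at hk
  rw [Nat.odd_iff] at hm
  rw [sOne_sub_one_apply, dif_neg (by omega)]

theorem sOne_sub_one_apply_of_even (v : Fin k → ZMod 2) {m j : Fin k} (hm : Even (m : ℕ))
    (hj : (j : ℕ) = m + 1) : (sOne k - 1) v m = v j := by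
  rw [Nat.even_iff] at hk hm
  rw [sOne_sub_one_apply, dif_pos ⟨by omega, by omega⟩]
  exact congrArg v (Fin.ext hj.symm)

theorem ker_sOne_sub_one_eq_spanSubset :
    LinearMap.ker (sOne k - 1) = Pi.spanSubset (ZMod 2) {i : Fin k | Even (i : ℕ)} := by
  ext v
  simp only [LinearMap.mem_ker, Pi.mem_spanSubset_iff, Set.mem_ofPred_eq, Nat.not_even_iff_odd]
  constructor
  · rintro hv i ⟨m, hi⟩
    have hm : 2 * m < k := by omega
    rw [← sOne_sub_one_apply_of_even hk v (m := ⟨2 * m, hm⟩) (even_two_mul m) hi, hv]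
    rfl
  · intro hv
    funext m
    rcases Nat.even_or_odd (m : ℕ) with hm | hm
    · rw [sOne_sub_one_apply_of_even hk v hm (j := ⟨m + 1, Nat.add_one_lt_of_even hm hk m.2⟩) rfl]
      exact hv _ hm.add_one
    · exact sOne_sub_one_apply_of_odd hk v hm

theorem range_sOne_sub_one_eq_spanSubset :
    LinearMap.range (sOne k - 1) = Pi.spanSubset (ZMod 2) {i : Fin k | Even (i : ℕ)} := by
  ext v
  simp only [LinearMap.mem_range, Pi.mem_spanSubset_iff, Set.mem_ofPred_eq, Nat.not_even_iff_odd]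
  constructor
  · rintro ⟨w, rfl⟩ i hi
    exact sOne_sub_one_apply_of_odd hk w hi
  · intro hv
    refine ⟨fun i => if h : 0 < (i : ℕ) then v ⟨i - 1, by omega⟩ else 0, funext fun m => ?_⟩
    rcases Nat.even_or_odd (m : ℕ) with hm | hm
    · rw [sOne_sub_one_apply_of_even hk _ hm (j := ⟨m + 1, Nat.add_one_lt_of_even hm hk m.2⟩) rfl]
      simp
    · rw [sOne_sub_one_apply_of_odd hk _ hm, hv m hm]

end

theorem span_eVec_odd_eq_spanSubset (k : ℕ) :
    Submodule.span (ZMod 2) {v : Fin k → ZMod 2 | ∃ j, 1 ≤ j ∧ j ≤ k ∧ Odd j ∧ v = eVec k j} =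
      Pi.spanSubset (ZMod 2) {i : Fin k | Even (i : ℕ)} := by
  rw [Pi.spanSubset]
  congr 1
  ext v
  simp only [Set.mem_ofPred_eq, Set.mem_image, Pi.basisFun_apply]
  constructor
  · rintro ⟨_, -, hjk, ⟨i, rfl⟩, rfl⟩
    exact ⟨⟨2 * i, by omega⟩, even_two_mul i, (eVec_succ _).symm⟩
  · rintro ⟨i, hi, rfl⟩
    exact ⟨i + 1, by omega, i.2, hi.add_one, (eVec_succ i).symm⟩

theorem ker_sOne_sub_one_general (k : ℕ) (hke : Even k) :
    LinearMap.ker (sOne k - 1) = LinearMap.range (sOne k - 1) ∧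
    LinearMap.ker (sOne k - 1) =
      Submodule.span (ZMod 2)
        {v : Fin k → ZMod 2 | ∃ j, 1 ≤ j ∧ j ≤ k ∧ Odd j ∧ v = eVec k j} ∧
    Module.finrank (ZMod 2) (LinearMap.ker (sOne k - 1)) = k / 2 ∧
    Module.finrank (ZMod 2) (LinearMap.range (sOne k - 1)) = k / 2 := by
  have hker_range : LinearMap.ker (sOne k - 1) = LinearMap.range (sOne k - 1) :=
    (ker_sOne_sub_one_eq_spanSubset hke).trans (range_sOne_sub_one_eq_spanSubset hke).symm
  have rank_nullity := LinearMap.finrank_range_add_finrank_ker (sOne k - 1)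
  rw [Module.finrank_fin_fun, ← hker_range] at rank_nullity
  refine ⟨hker_range, ?_, by omega, by rw [← hker_range]; omega⟩
  rw [ker_sOne_sub_one_eq_spanSubset hke, span_eVec_odd_eq_spanSubset]

/-- Assume `k` is even.  Then `ker (s₁ - 1) = range (s₁ - 1)`, and both
equal the `F₂`-span of the odd-indexed standard basis vectors
`{e_j : 1 ≤ j ≤ k, j odd}`; in particular each has `F₂`-dimension `k/2`. -/
theorem ker_sOne_sub_one (k : ℕ) (hk : 1 ≤ k) (hke : Even k) :
    LinearMap.ker (sOne k - 1) = LinearMap.range (sOne k - 1) ∧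
    LinearMap.ker (sOne k - 1) =
      Submodule.span (ZMod 2)
        {v : Fin k → ZMod 2 | ∃ j, 1 ≤ j ∧ j ≤ k ∧ Odd j ∧ v = eVec k j} ∧
    Module.finrank (ZMod 2) (LinearMap.ker (sOne k - 1)) = k / 2 ∧
    Module.finrank (ZMod 2) (LinearMap.range (sOne k - 1)) = k / 2 :=
  ker_sOne_sub_one_general k hke
end

section
/- Let n ≥ 1 and k = 2^(n+1). Set a = s₁ − 1 and b = t^(2^n) − 1 (F₂-linear endomorphisms of V). For each even j with 2^n + 2 ≤ j ≤ 2^(n+1), let V_j be the F₂-span of the four vectors e_j, a(e_j), b(e_j), b(a(e_j)). Then each V_j has F₂-dimension 4, and V is the internal direct sum of the 2^(n−1) subspaces V_j (j even, 2^n + 2 ≤ j ≤ 2^(n+1)). -/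
namespace DSD

def coord (k : ℕ) (v : Fin k → ZMod 2) (q : ℕ) : ZMod 2 :=
  if h : q < k then v ⟨q, h⟩ else 0

theorem coord_add (k : ℕ) (x y : Fin k → ZMod 2) (q : ℕ) :
    coord k (x + y) q = coord k x q + coord k y q := by
  unfold coord; split <;> simp

theorem coord_smul (k : ℕ) (c : ZMod 2) (x : Fin k → ZMod 2) (q : ℕ) :
    coord k (c • x) q = c * coord k x q := by
  unfold coord; split <;> simp

noncomputable def shiftMap (k : ℕ) (c : ℕ → Prop) [DecidablePred c] :
    Module.End (ZMod 2) (Fin k → ZMod 2) where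
  toFun v := fun q => v q + if c (q : ℕ) then coord k v ((q : ℕ) + 1) else 0
  map_add' x y := by
    funext q
    by_cases h : c (q : ℕ) <;> simp [h, coord_add] <;> ring
  map_smul' r x := by
    funext q
    by_cases h : c (q : ℕ) <;> simp [h, coord_smul, mul_add]

theorem shiftMap_apply (k : ℕ) (c : ℕ → Prop) [DecidablePred c] (v : Fin k → ZMod 2) (q : Fin k) :
    shiftMap k c v q = v q + if c (q : ℕ) then coord k v ((q : ℕ) + 1) else 0 := rfl

theorem coord_shiftMap (k : ℕ) (c : ℕ → Prop) [DecidablePred c] (v : Fin k → ZMod 2) (q : ℕ) :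
    coord k (shiftMap k c v) q = coord k v q + if c q then coord k v (q + 1) else 0 := by
  unfold coord shiftMap
  by_cases h : q < k
  · simp only [dif_pos h]
    rfl
  · have h1 : ¬ (q + 1 < k) := by omega
    simp [h, h1]

theorem eVec_eq_single (k j : ℕ) (h1 : 1 ≤ j) (h2 : j ≤ k) :
    eVec k j = Pi.single (⟨j - 1, by omega⟩ : Fin k) 1 := by
  funext i
  simp only [eVec, Pi.single_apply]
  by_cases h : (i : ℕ) + 1 = j
  · rw [if_pos h, if_pos (by ext; simp; omega)]
  · rw [if_neg h, if_neg (by intro hh; apply h; have := congrArg Fin.val hh; simp at this; omega)]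

theorem sOne_eq (k : ℕ) : sOne k = shiftMap k (fun q => q % 2 = k % 2) := by
  apply (Pi.basisFun (ZMod 2) (Fin k)).ext
  intro i
  rw [sOne, Module.Basis.constr_basis]
  funext q
  have hb : Pi.basisFun (ZMod 2) (Fin k) i = Pi.single i 1 := by
    simp [Pi.basisFun_apply]
  rw [hb]
  rw [apply_ite (fun f : Fin k → ZMod 2 => f q)]
  simp only [shiftMap_apply, Pi.add_apply, eVec, coord, Pi.single_apply, Fin.ext_iff, Fin.val_mk]
  have hq := q.isLt
  have hi := i.isLt
  split_ifs <;> first | rfl | decide | omega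


noncomputable def sTwoC (k : ℕ) := shiftMap k (fun q => ¬ q % 2 = k % 2)

theorem sTwo_eq (k : ℕ) : sTwo k = shiftMap k (fun q => ¬ q % 2 = k % 2) := by
  apply (Pi.basisFun (ZMod 2) (Fin k)).ext
  intro i
  rw [sTwo, Module.Basis.constr_basis]
  have hb : Pi.basisFun (ZMod 2) (Fin k) i = Pi.single i 1 := by
    simp [Pi.basisFun_apply]
  rw [hb]
  funext q
  rw [apply_ite (fun f : Fin k → ZMod 2 => f q)]
  simp only [shiftMap_apply, Pi.add_apply, eVec, coord, Pi.single_apply, Fin.ext_iff, Fin.val_mk]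
  have hq := q.isLt
  have hi := i.isLt
  split_ifs <;> first | rfl | decide | omega

noncomputable def nN (k : ℕ) : Module.End (ZMod 2) (Fin k → ZMod 2) := tEnd k - 1

theorem coord_sub (k : ℕ) (x y : Fin k → ZMod 2) (q : ℕ) :
    coord k (x - y) q = coord k x q - coord k y q := by
  unfold coord; split <;> simp

theorem coord_nN (k : ℕ) (hk : k % 2 = 0) (v : Fin k → ZMod 2) (q : ℕ) :
    coord k (nN k v) q = coord k v (q + 1) + if q % 2 = 1 then coord k v (q + 2) else 0 := by
  have h1 : nN k v = sTwo k (sOne k v) - v := by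
    simp [nN, tEnd, LinearMap.sub_apply, Module.End.mul_apply]
  rw [h1, coord_sub, sTwo_eq, sOne_eq, coord_shiftMap, coord_shiftMap, coord_shiftMap]
  rcases Nat.mod_two_eq_zero_or_one q with h | h
  · have h2 : (q + 1) % 2 = 1 := by omega
    simp [h, hk, h2]
    try ring
  · have h2 : (q + 1) % 2 = 0 := by omega
    simp [h, hk, h2]
    try ring

def Lead (k p : ℕ) (v : Fin k → ZMod 2) : Prop :=
  coord k v p = 1 ∧ ∀ q, p < q → coord k v q = 0

theorem lead_nN (k : ℕ) (hk : k % 2 = 0) {p : ℕ} {v : Fin k → ZMod 2}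
    (h : Lead k p v) (hp : 1 ≤ p) : Lead k (p - 1) (nN k v) := by
  constructor
  · rw [coord_nN k hk]
    have h1 : p - 1 + 1 = p := by omega
    rw [h1, h.1, h.2 (p - 1 + 2) (by omega)]
    simp
  · intro q hq
    rw [coord_nN k hk, h.2 (q + 1) (by omega), h.2 (q + 2) (by omega)]
    simp

theorem lead_nN_pow (k : ℕ) (hk : k % 2 = 0) (m : ℕ) {p : ℕ} {v : Fin k → ZMod 2}
    (h : Lead k p v) (hm : m ≤ p) : Lead k (p - m) ((nN k ^ m) v) := by
  induction m with
  | zero => simpa using h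
  | succ r ih =>
    have h1 : nN k ^ (r + 1) = nN k * nN k ^ r := by rw [pow_succ']
    rw [h1]
    have h2 : (nN k * nN k ^ r) v = nN k ((nN k ^ r) v) := rfl
    rw [h2]
    have h3 : p - (r + 1) = (p - r) - 1 := by omega
    rw [h3]
    exact lead_nN k hk (ih (by omega)) (by omega)

theorem lead_eVec (k j : ℕ) (h1 : 1 ≤ j) (h2 : j ≤ k) : Lead k (j - 1) (eVec k j) := by
  constructor
  · unfold coord eVec
    rw [dif_pos (by omega : j - 1 < k)]
    simp only [Fin.val_mk]
    rw [if_pos (by omega)]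
  · intro q hq
    unfold coord eVec
    split
    · simp only [Fin.val_mk]
      rw [if_neg (by omega)]
    · rfl

theorem end_add_self (k : ℕ) (f : Module.End (ZMod 2) (Fin k → ZMod 2)) : f + f = 0 := by
  apply LinearMap.ext; intro v; funext i
  show f v i + f v i = 0
  exact CharTwo.add_self_eq_zero _

theorem tEnd_eq (k : ℕ) : tEnd k = 1 + nN k := by
  unfold nN; abel

theorem tpow (k n : ℕ) : tEnd k ^ 2 ^ n = 1 + nN k ^ 2 ^ n := by
  induction n with
  | zero => simpa using tEnd_eq k
  | succ m ih =>
    have h1 : (2 : ℕ) ^ (m + 1) = 2 ^ m * 2 := by rw [pow_succ]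
    rw [h1, pow_mul, pow_mul, ih]
    set x := nN k ^ 2 ^ m with hx
    have h2 : (1 + x) ^ 2 = 1 + (x + x) + x * x := by noncomm_ring
    rw [h2, end_add_self, add_zero, ← pow_two]

theorem b_eq (k n : ℕ) : tEnd k ^ 2 ^ n - 1 = nN k ^ 2 ^ n := by
  rw [tpow]; abel

noncomputable def aE (k : ℕ) : Module.End (ZMod 2) (Fin k → ZMod 2) := sOne k - 1

theorem a_eVec (k : ℕ) (hk : k % 2 = 0) (j : ℕ) (hj : j % 2 = 0) (h1 : 2 ≤ j) (h2 : j ≤ k) :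
    aE k (eVec k j) = eVec k (j - 1) := by
  have h3 : aE k (eVec k j) = sOne k (eVec k j) - eVec k j := rfl
  rw [h3, sOne_eq]
  funext q
  have hq := q.isLt
  simp only [Pi.sub_apply, shiftMap_apply, eVec, coord, Fin.val_mk]
  split_ifs <;> first | rfl | decide | omega


theorem lead_eVec' (k p : ℕ) (h : p + 1 ≤ k) : Lead k p (eVec k (p + 1)) := by
  simpa using lead_eVec k (p + 1) (by omega) h

theorem a_eVec' (k : ℕ) (hk : k % 2 = 0) (j : ℕ) (hj : j % 2 = 1) (hjk : j + 1 ≤ k) :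
    aE k (eVec k (j + 1)) = eVec k j := by
  simpa using a_eVec k hk (j + 1) (by omega) (by omega) hjk

noncomputable def gFam (k K : ℕ) (i : Fin k) : Fin k → ZMod 2 :=
  if K ≤ (i : ℕ) then
    (if (i : ℕ) % 2 = 1 then eVec k ((i : ℕ) + 1) else aE k (eVec k ((i : ℕ) + 2)))
  else
    (if (i : ℕ) % 2 = 1 then (nN k ^ K) (eVec k ((i : ℕ) + K + 1))
     else (nN k ^ K) (aE k (eVec k ((i : ℕ) + K + 2))))

theorem g_lead (k K : ℕ) (hK2 : 2 ≤ K) (hKe : K % 2 = 0) (hkK : k = 2 * K) (i : Fin k) :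
    Lead k (i : ℕ) (gFam k K i) := by
  have hk : k % 2 = 0 := by omega
  have hi := i.isLt
  unfold gFam
  by_cases h1 : K ≤ (i : ℕ) <;> by_cases h2 : (i : ℕ) % 2 = 1
  · rw [if_pos h1, if_pos h2]
    exact lead_eVec' k _ (by omega)
  · rw [if_pos h1, if_neg h2]
    have h3 : (i : ℕ) + 2 = ((i : ℕ) + 1) + 1 := by omega
    rw [h3, a_eVec' k hk _ (by omega) (by omega)]
    exact lead_eVec' k _ (by omega)
  · rw [if_neg h1, if_pos h2]
    have h4 := lead_nN_pow k hk K (lead_eVec' k ((i : ℕ) + K) (by omega)) (by omega)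
    simpa using h4
  · rw [if_neg h1, if_neg h2]
    have h3 : (i : ℕ) + K + 2 = ((i : ℕ) + K + 1) + 1 := by omega
    rw [h3, a_eVec' k hk _ (by omega) (by omega)]
    have h4 := lead_nN_pow k hk K (lead_eVec' k ((i : ℕ) + K) (by omega)) (by omega)
    simpa using h4

def jOf (K : ℕ) (p : ℕ) : ℕ :=
  if K ≤ p then (if p % 2 = 1 then p + 1 else p + 2)
  else (if p % 2 = 1 then p + K + 1 else p + K + 2)

theorem jOf_bounds (k K : ℕ) (hK2 : 2 ≤ K) (hKe : K % 2 = 0) (hkK : k = 2 * K)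
    (i : Fin k) : (jOf K (i : ℕ)) % 2 = 0 ∧ K + 2 ≤ jOf K (i : ℕ) ∧ jOf K (i : ℕ) ≤ 2 * K := by
  have hi := i.isLt
  unfold jOf
  split_ifs <;> omega

theorem jOf_fiber (k K : ℕ) (hK2 : 2 ≤ K) (hKe : K % 2 = 0) (hkK : k = 2 * K)
    (j : ℕ) (hj : j % 2 = 0) (h1 : K + 2 ≤ j) (h2 : j ≤ 2 * K) (i : Fin k) :
    jOf K (i : ℕ) = j ↔
      ((i : ℕ) = j - 1 ∨ (i : ℕ) = j - 2 ∨ (i : ℕ) = j - 1 - K ∨ (i : ℕ) = j - 2 - K) := by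
  have hi := i.isLt
  unfold jOf
  split_ifs <;> omega

theorem g_mem (k K : ℕ) (hK2 : 2 ≤ K) (hKe : K % 2 = 0) (hkK : k = 2 * K) (i : Fin k) :
    gFam k K i ∈ ({eVec k (jOf K (i : ℕ)), aE k (eVec k (jOf K (i : ℕ))),
      (nN k ^ K) (eVec k (jOf K (i : ℕ))), (nN k ^ K) (aE k (eVec k (jOf K (i : ℕ))))} :
        Set (Fin k → ZMod 2)) := by
  unfold gFam jOf
  by_cases h1 : K ≤ (i : ℕ) <;> by_cases h2 : (i : ℕ) % 2 = 1 <;>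
    simp only [h1, h2, if_true, if_false, if_pos, if_neg, not_false_iff] <;>
    simp [Set.mem_insert_iff]

theorem g_vals (k K : ℕ) (hK2 : 2 ≤ K) (hKe : K % 2 = 0) (hkK : k = 2 * K)
    (j : ℕ) (hj : j % 2 = 0) (h1 : K + 2 ≤ j) (h2 : j ≤ 2 * K) :
    gFam k K ⟨j - 1, by omega⟩ = eVec k j ∧
    gFam k K ⟨j - 2, by omega⟩ = aE k (eVec k j) ∧
    gFam k K ⟨j - 1 - K, by omega⟩ = (nN k ^ K) (eVec k j) ∧
    gFam k K ⟨j - 2 - K, by omega⟩ = (nN k ^ K) (aE k (eVec k j)) := by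
  refine ⟨?_, ?_, ?_, ?_⟩ <;> (unfold gFam; simp only [Fin.val_mk]; split_ifs)
  · rw [show j - 1 + 1 = j by omega]
  · exfalso; omega
  · exfalso; omega
  · exfalso; omega
  · exfalso; omega
  · rw [show j - 2 + 2 = j by omega]
  · exfalso; omega
  · exfalso; omega
  · exfalso; omega
  · exfalso; omega
  · rw [show j - 1 - K + K + 1 = j by omega]
  · exfalso; omega
  · exfalso; omega
  · exfalso; omega
  · exfalso; omega
  · rw [show j - 2 - K + K + 2 = j by omega]


theorem inj4 {k : ℕ} (p1 p2 p3 p4 : ℕ) (f : Fin 4 → Fin k)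
    (h1 : (f 0 : ℕ) = p1) (h2 : (f 1 : ℕ) = p2) (h3 : (f 2 : ℕ) = p3) (h4 : (f 3 : ℕ) = p4)
    (hne : p1 ≠ p2 ∧ p1 ≠ p3 ∧ p1 ≠ p4 ∧ p2 ≠ p3 ∧ p2 ≠ p4 ∧ p3 ≠ p4) :
    Function.Injective f := by
  intro x y hxy
  fin_cases x <;> fin_cases y <;> simp_all [Fin.ext_iff]

theorem coord_fin (k : ℕ) (v : Fin k → ZMod 2) (q : Fin k) : coord k v (q : ℕ) = v q := by
  unfold coord; rw [dif_pos q.isLt]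

theorem g_li (k K : ℕ) (hK2 : 2 ≤ K) (hKe : K % 2 = 0) (hkK : k = 2 * K) :
    LinearIndependent (ZMod 2) (gFam k K) := by
  have htri : (Matrix.of (gFam k K)).BlockTriangular OrderDual.toDual := by
    intro i q hq
    have hq' : (i : ℕ) < (q : ℕ) := hq
    have h := (g_lead k K hK2 hKe hkK i).2 (q : ℕ) hq'
    rw [coord_fin] at h
    exact h
  have hdet : (Matrix.of (gFam k K)).det = 1 := by
    rw [Matrix.det_of_lowerTriangular _ htri]
    apply Finset.prod_eq_one
    intro i _
    have h := (g_lead k K hK2 hKe hkK i).1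
    rw [coord_fin] at h
    exact h
  have hu : IsUnit (Matrix.of (gFam k K)) := by
    rw [Matrix.isUnit_iff_isUnit_det, hdet]; exact isUnit_one
  exact Matrix.linearIndependent_rows_iff_isUnit.mpr hu

end DSD

/-- Let `n ≥ 1` and `k = 2^(n+1)`.  Set `a = s₁ - 1` and
`b = t^(2^n) - 1`.  For each even `j` with `2^n + 2 ≤ j ≤ 2^(n+1)`, let `V_j` be the
`F₂`-span of `e_j, a(e_j), b(e_j), b(a(e_j))`.  Then each `V_j` has `F₂`-dimension `4`,
and `V` is the internal direct sum of the `2^(n-1)` subspaces `V_j`. -/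
theorem direct_sum_decomposition (n : ℕ) (hn : 1 ≤ n)
    (a b : Module.End (ZMod 2) (Fin (2 ^ (n + 1)) → ZMod 2))
    (ha : a = sOne (2 ^ (n + 1)) - 1)
    (hb : b = tEnd (2 ^ (n + 1)) ^ 2 ^ n - 1)
    (Vj : ℕ → Submodule (ZMod 2) (Fin (2 ^ (n + 1)) → ZMod 2))
    (hVj : ∀ j, Vj j = Submodule.span (ZMod 2)
      {eVec (2 ^ (n + 1)) j, a (eVec (2 ^ (n + 1)) j),
        b (eVec (2 ^ (n + 1)) j), b (a (eVec (2 ^ (n + 1)) j))}) :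
    (∀ j : ℕ, Even j → 2 ^ n + 2 ≤ j → j ≤ 2 ^ (n + 1) →
      Module.finrank (ZMod 2) (Vj j) = 4) ∧
    iSupIndep (fun j : {j : ℕ // Even j ∧ 2 ^ n + 2 ≤ j ∧ j ≤ 2 ^ (n + 1)} => Vj j) ∧
    (⨆ j : {j : ℕ // Even j ∧ 2 ^ n + 2 ≤ j ∧ j ≤ 2 ^ (n + 1)}, Vj j) = ⊤ ∧
    Nat.card {j : ℕ // Even j ∧ 2 ^ n + 2 ≤ j ∧ j ≤ 2 ^ (n + 1)} = 2 ^ (n - 1) := by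
  classical
  have hK2 : 2 ≤ 2 ^ n := by
    calc (2:ℕ) = 2 ^ 1 := rfl
    _ ≤ 2 ^ n := Nat.pow_le_pow_right (by norm_num) hn
  have hKe : 2 ^ n % 2 = 0 := by
    have h : (2:ℕ) ∣ 2 ^ n := dvd_pow_self 2 (by omega)
    omega
  have hkK : 2 ^ (n + 1) = 2 * 2 ^ n := by rw [pow_succ]; ring
  have hc : 2 ^ n = 2 * 2 ^ (n - 1) := by
    conv_lhs => rw [show n = (n - 1) + 1 by omega]
    rw [pow_succ]; ring
  have ha' : a = DSD.aE (2 ^ (n + 1)) := ha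
  have hb' : b = DSD.nN (2 ^ (n + 1)) ^ 2 ^ n := by rw [hb, DSD.b_eq]
  set g := DSD.gFam (2 ^ (n + 1)) (2 ^ n) with hg
  set T : ℕ → Set (Fin (2 ^ (n + 1))) := fun j => {i | DSD.jOf (2 ^ n) (i : ℕ) = j} with hT
  have hli : LinearIndependent (ZMod 2) g := DSD.g_li _ _ hK2 hKe hkK
  -- Vj j = span (g '' T j)
  have hVT : ∀ j : ℕ, j % 2 = 0 → 2 ^ n + 2 ≤ j → j ≤ 2 * 2 ^ n →
      Vj j = Submodule.span (ZMod 2) (g '' T j) := by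
    intro j hj hj1 hj2
    obtain ⟨gv1, gv2, gv3, gv4⟩ := DSD.g_vals (2 ^ (n + 1)) (2 ^ n) hK2 hKe hkK j hj hj1 hj2
    apply le_antisymm
    · rw [hVj j, ha', hb']
      apply Submodule.span_le.2
      intro x hx
      rcases hx with rfl | rfl | rfl | rfl
      · exact Submodule.subset_span ⟨⟨j - 1, by omega⟩, by
          show DSD.jOf (2 ^ n) _ = j
          rw [DSD.jOf_fiber (2 ^ (n+1)) (2 ^ n) hK2 hKe hkK j hj hj1 hj2]
          simp, gv1⟩
      · exact Submodule.subset_span ⟨⟨j - 2, by omega⟩, by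
          show DSD.jOf (2 ^ n) _ = j
          rw [DSD.jOf_fiber (2 ^ (n+1)) (2 ^ n) hK2 hKe hkK j hj hj1 hj2]
          simp, gv2⟩
      · exact Submodule.subset_span ⟨⟨j - 1 - 2 ^ n, by omega⟩, by
          show DSD.jOf (2 ^ n) _ = j
          rw [DSD.jOf_fiber (2 ^ (n+1)) (2 ^ n) hK2 hKe hkK j hj hj1 hj2]
          simp, gv3⟩
      · exact Submodule.subset_span ⟨⟨j - 2 - 2 ^ n, by omega⟩, by
          show DSD.jOf (2 ^ n) _ = j
          rw [DSD.jOf_fiber (2 ^ (n+1)) (2 ^ n) hK2 hKe hkK j hj hj1 hj2]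
          simp, gv4⟩
    · apply Submodule.span_le.2
      rintro x ⟨i, hi, rfl⟩
      have hmem := DSD.g_mem (2 ^ (n + 1)) (2 ^ n) hK2 hKe hkK i
      have hi' : DSD.jOf (2 ^ n) (i : ℕ) = j := hi
      rw [hi'] at hmem
      rw [hVj j, ha', hb']
      exact Submodule.subset_span hmem
  refine ⟨?_, ?_, ?_, ?_⟩
  · -- finrank = 4
    intro j hje hj1 hj2
    have hj : j % 2 = 0 := Nat.even_iff.mp hje
    obtain ⟨gv1, gv2, gv3, gv4⟩ :=
      DSD.g_vals (2 ^ (n + 1)) (2 ^ n) hK2 hKe hkK j hj hj1 (by omega)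
    set i1 : Fin (2 ^ (n + 1)) := ⟨j - 1, by omega⟩
    set i2 : Fin (2 ^ (n + 1)) := ⟨j - 2, by omega⟩
    set i3 : Fin (2 ^ (n + 1)) := ⟨j - 1 - 2 ^ n, by omega⟩
    set i4 : Fin (2 ^ (n + 1)) := ⟨j - 2 - 2 ^ n, by omega⟩
    have hinj : Function.Injective ![i1, i2, i3, i4] := by
      refine DSD.inj4 (j - 1) (j - 2) (j - 1 - 2 ^ n) (j - 2 - 2 ^ n) ![i1, i2, i3, i4]
        rfl rfl rfl rfl ⟨by omega, by omega, by omega, by omega, by omega, by omega⟩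
    have hrange : Set.range (g ∘ ![i1, i2, i3, i4]) =
        {eVec (2 ^ (n + 1)) j, a (eVec (2 ^ (n + 1)) j),
          b (eVec (2 ^ (n + 1)) j), b (a (eVec (2 ^ (n + 1)) j))} := by
      rw [Set.range_comp]
      have h4 : Set.range ![i1, i2, i3, i4] = {i1, i2, i3, i4} := by
        simp only [Matrix.range_cons, Matrix.range_empty, Set.union_empty,
          Set.singleton_union]
      rw [h4, ha', hb']
      simp only [Set.image_insert_eq, Set.image_singleton]
      rw [show g i1 = _ from gv1, show g i2 = _ from gv2,
        show g i3 = _ from gv3, show g i4 = _ from gv4]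
    rw [hVj j, ← hrange, finrank_span_eq_card (hli.comp _ hinj)]
    simp
  · -- iSupIndep
    rw [iSupIndep_def]
    rintro ⟨j, hje, hj1, hj2⟩
    have hj : j % 2 = 0 := Nat.even_iff.mp hje
    have hdisj := hli.disjoint_span_image
      (disjoint_compl_right : Disjoint (T j) (T j)ᶜ)
    rw [hVT j hj hj1 (by omega)]
    refine Disjoint.mono_right ?_ hdisj
    apply iSup_le
    rintro ⟨j', hje', hj1', hj2'⟩
    apply iSup_le
    intro hts
    have hj' : j' % 2 = 0 := Nat.even_iff.mp hje'
    rw [hVT j' hj' hj1' (by omega)]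
    apply Submodule.span_mono
    apply Set.image_mono
    intro i hi
    have hi' : DSD.jOf (2 ^ n) (i : ℕ) = j' := hi
    show ¬ DSD.jOf (2 ^ n) (i : ℕ) = j
    intro hcon
    exact hts (Subtype.ext (show j' = j from by rw [← hi']; exact hcon))
  · -- iSup = ⊤
    haveI : Nonempty (Fin (2 ^ (n + 1))) := ⟨⟨0, by positivity⟩⟩
    have hcard : Fintype.card (Fin (2 ^ (n + 1))) =
        Module.finrank (ZMod 2) (Fin (2 ^ (n + 1)) → ZMod 2) := by
      rw [Module.finrank_fintype_fun_eq_card]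
    have htop : Submodule.span (ZMod 2) (Set.range g) = ⊤ := by
      have hB := coe_basisOfLinearIndependentOfCardEqFinrank hli hcard
      rw [← hB]
      exact (basisOfLinearIndependentOfCardEqFinrank hli hcard).span_eq
    rw [eq_top_iff, ← htop]
    apply Submodule.span_le.2
    rintro x ⟨i, rfl⟩
    have hbd := DSD.jOf_bounds (2 ^ (n + 1)) (2 ^ n) hK2 hKe hkK i
    have hmem := DSD.g_mem (2 ^ (n + 1)) (2 ^ n) hK2 hKe hkK i
    have hin : g i ∈ Vj (DSD.jOf (2 ^ n) (i : ℕ)) := by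
      rw [hVj _, ha', hb']
      exact Submodule.subset_span hmem
    exact le_iSup (fun s : {j : ℕ // Even j ∧ 2 ^ n + 2 ≤ j ∧ j ≤ 2 ^ (n + 1)} => Vj ↑s)
      ⟨DSD.jOf (2 ^ n) (i : ℕ), Nat.even_iff.mpr hbd.1, hbd.2.1, by omega⟩ hin
  · -- card
    have e : {j : ℕ // Even j ∧ 2 ^ n + 2 ≤ j ∧ j ≤ 2 ^ (n + 1)} ≃ Fin (2 ^ (n - 1)) := by
      refine ⟨fun x => ⟨(x.1 - (2 ^ n + 2)) / 2, ?_⟩,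
        fun i => ⟨2 ^ n + 2 + 2 * (i : ℕ), Nat.even_iff.mpr (by omega), by omega, ?_⟩, ?_, ?_⟩
      · obtain ⟨he, h1, h2⟩ := x.2
        have he' := Nat.even_iff.mp he
        omega
      · have := i.isLt
        omega
      · rintro ⟨j, hje, hj1, hj2⟩
        have hje' := Nat.even_iff.mp hje
        apply Subtype.ext
        show 2 ^ n + 2 + 2 * ((j - (2 ^ n + 2)) / 2) = j
        omega
      · intro i
        apply Fin.ext
        show (2 ^ n + 2 + 2 * (i : ℕ) - (2 ^ n + 2)) / 2 = (i : ℕ)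
        omega
    rw [Nat.card_congr e, Nat.card_eq_fintype_card, Fintype.card_fin]
end

section
/- Let p be an odd prime. Then p ≡ 1 (mod 8) if and only if there exist integers a and b with p = a² + 16·b². -/
lemma aux_sq16 (p a b : ℕ) (hp8 : p % 8 = 1) (hab : a ^ 2 + b ^ 2 = p)
    (ha : a % 2 = 1) (hb : b % 2 = 0) : ∃ d : ℕ, p = a ^ 2 + 16 * d ^ 2 := by
  obtain ⟨c, rfl⟩ : ∃ c, b = 2 * c := ⟨b / 2, by omega⟩
  obtain ⟨k, rfl⟩ : ∃ k, a = 2 * k + 1 := ⟨a / 2, by omega⟩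
  have hc : c % 2 = 0 := by
    have h : 4 * (k ^ 2 + k) + 1 + 4 * c ^ 2 = p := by ring_nf; ring_nf at hab; omega
    have hy : (k ^ 2 + k) % 2 = 0 := by
      have : k ^ 2 + k = k * (k + 1) := by ring
      rw [this]; exact Nat.even_iff.mp (Nat.even_mul_succ_self k)
    have hx : c ^ 2 % 2 = c % 2 := by
      rcases Nat.even_or_odd c with hc | hc
      · obtain ⟨t, rfl⟩ := hc
        have : (t + t) ^ 2 = 2 * (2 * t ^ 2) := by ring
        rw [this]; omega
      · obtain ⟨t, rfl⟩ := hc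
        have : (2 * t + 1) ^ 2 = 2 * (2 * t ^ 2 + 2 * t) + 1 := by ring
        rw [this]; omega
    generalize k ^ 2 + k = y at *
    generalize c ^ 2 = x at *
    omega
  obtain ⟨d, rfl⟩ : ∃ d, c = 2 * d := ⟨c / 2, by omega⟩
  refine ⟨d, ?_⟩
  have : (2 * (2 * d)) ^ 2 = 16 * d ^ 2 := by ring
  omega

/-- Let `p` be an odd prime.  Then `p ≡ 1 (mod 8)` if and only if
there exist integers `a` and `b` with `p = a² + 16 b²`. -/
theorem prime_one_mod_eight_iff (p : ℕ) (hp : p.Prime) (hodd : Odd p) :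
    p % 8 = 1 ↔ ∃ a b : ℤ, (p : ℤ) = a ^ 2 + 16 * b ^ 2 := by
  have hp2 : p % 2 = 1 := Nat.odd_iff.mp hodd
  constructor
  · intro h8
    haveI : Fact p.Prime := ⟨hp⟩
    obtain ⟨a, b, hab⟩ := Nat.Prime.sq_add_sq (p := p) (by omega)
    have hpar : a ^ 2 % 2 = a % 2 ∧ b ^ 2 % 2 = b % 2 := by
      constructor <;>
        first
        | (rcases Nat.even_or_odd a with ⟨t, rfl⟩ | ⟨t, rfl⟩
           · have : (t + t) ^ 2 = 2 * (2 * t ^ 2) := by ring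
             rw [this]; omega
           · have : (2 * t + 1) ^ 2 = 2 * (2 * t ^ 2 + 2 * t) + 1 := by ring
             rw [this]; omega)
        | (rcases Nat.even_or_odd b with ⟨t, rfl⟩ | ⟨t, rfl⟩
           · have : (t + t) ^ 2 = 2 * (2 * t ^ 2) := by ring
             rw [this]; omega
           · have : (2 * t + 1) ^ 2 = 2 * (2 * t ^ 2 + 2 * t) + 1 := by ring
             rw [this]; omega)
    have hcases : (a % 2 = 1 ∧ b % 2 = 0) ∨ (a % 2 = 0 ∧ b % 2 = 1) := by omega
    rcases hcases with ⟨ha, hb⟩ | ⟨ha, hb⟩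
    · obtain ⟨d, hd⟩ := aux_sq16 p a b h8 hab ha hb
      exact ⟨a, d, by push_cast [hd]; ring⟩
    · obtain ⟨d, hd⟩ := aux_sq16 p b a h8 (by omega) hb ha
      exact ⟨b, d, by push_cast [hd]; ring⟩
  · rintro ⟨a, b, h⟩
    rcases Int.even_or_odd a with ⟨t, rfl⟩ | ⟨t, rfl⟩
    · exfalso
      have h' : (p : ℤ) = 4 * t ^ 2 + 16 * b ^ 2 := by rw [h]; ring
      generalize t ^ 2 = T at h'
      generalize b ^ 2 = B at h'
      omega
    · have hm : ∃ m : ℤ, t ^ 2 + t = 2 * m := by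
        have : Even (t * (t + 1)) := Int.even_mul_succ_self t
        obtain ⟨m, hm⟩ := this
        exact ⟨m, by rw [show t ^ 2 + t = t * (t + 1) by ring, hm]; ring⟩
      obtain ⟨m, hm⟩ := hm
      have h' : (p : ℤ) = 8 * m + 1 + 16 * b ^ 2 := by
        rw [h, show (2 * t + 1) ^ 2 = 4 * (t ^ 2 + t) + 1 by ring, hm]; ring
      generalize b ^ 2 = B at h'
      omega
end

section
/- Let p be a prime. Then the following are equivalent: (i) there exist integers a and c with p = a² + 64·c² and a ≡ 1 (mod 8) or a ≡ −1 (mod 8); (ii) p ≡ 1 (mod 16) and there exist integers a and b with p = a² + 16·b² and a + 4b ≡ 1 (mod 8) or a + 4b ≡ −1 (mod 8). -/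
/-- Let `p` be a prime.  Then the following are equivalent:
(i) there exist integers `a, c` with `p = a² + 64 c²` and `a ≡ ±1 (mod 8)`;
(ii) `p ≡ 1 (mod 16)` and there exist integers `a, b` with `p = a² + 16 b²` and
`a + 4b ≡ ±1 (mod 8)`. -/
theorem P1star_characterization (p : ℕ) (hp : p.Prime) :
    (∃ a c : ℤ, (p : ℤ) = a ^ 2 + 64 * c ^ 2 ∧
        (a ≡ 1 [ZMOD 8] ∨ a ≡ -1 [ZMOD 8])) ↔
      (p % 16 = 1 ∧ ∃ a b : ℤ, (p : ℤ) = a ^ 2 + 16 * b ^ 2 ∧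
        (a + 4 * b ≡ 1 [ZMOD 8] ∨ a + 4 * b ≡ -1 [ZMOD 8])) := by
  constructor
  · rintro ⟨a, c, hpe, ha⟩
    have ha8 : a % 8 = 1 ∨ a % 8 = 7 := by
      rcases ha with h | h
      · have h' : a % 8 = 1 % 8 := h
        omega
      · have h' : a % 8 = (-1) % 8 := h
        omega
    have hp16 : p % 16 = 1 := by
      rcases ha8 with h | h
      · obtain ⟨q, hq⟩ : ∃ q, a = 8 * q + 1 := ⟨a / 8, by omega⟩
        have hm : (p : ℤ) = 16 * (4 * q ^ 2 + q + 4 * c ^ 2) + 1 := by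
          rw [hpe, hq]; ring
        omega
      · obtain ⟨q, hq⟩ : ∃ q, a = 8 * q + 7 := ⟨a / 8, by omega⟩
        have hm : (p : ℤ) = 16 * (4 * q ^ 2 + 7 * q + 4 * c ^ 2 + 3) + 1 := by
          rw [hpe, hq]; ring
        omega
    refine ⟨hp16, a, 2 * c, by rw [hpe]; ring, ?_⟩
    rcases ha8 with h | h
    · left
      show (a + 4 * (2 * c)) % 8 = 1 % 8
      omega
    · right
      show (a + 4 * (2 * c)) % 8 = (-1) % 8
      omega
  · rintro ⟨hp16, a, b, hpe, hab⟩
    have hab8 : (a + 4 * b) % 8 = 1 ∨ (a + 4 * b) % 8 = 7 := by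
      rcases hab with h | h
      · have h' : (a + 4 * b) % 8 = 1 % 8 := h
        omega
      · have h' : (a + 4 * b) % 8 = (-1) % 8 := h
        omega
    have hp16' : (p : ℤ) % 16 = 1 := by omega
    have ha8 : a % 8 = 1 ∨ a % 8 = 7 := by
      obtain ⟨q, r, hr0, hr8, hq⟩ : ∃ q r, 0 ≤ r ∧ r < 8 ∧ a = 8 * q + r :=
        ⟨a / 8, a % 8, by omega, by omega, by omega⟩
      obtain ⟨m, hm⟩ : ∃ m : ℤ, (p : ℤ) = 16 * m + r ^ 2 :=
        ⟨4 * q ^ 2 + q * r + b ^ 2, by rw [hpe, hq]; ring⟩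
      have hr : r = 0 ∨ r = 1 ∨ r = 2 ∨ r = 3 ∨ r = 4 ∨
          r = 5 ∨ r = 6 ∨ r = 7 := by omega
      rcases hr with h | h | h | h | h | h | h | h <;>
        rw [h] at hm <;> norm_num at hm <;> omega
    have hb2 : b % 2 = 0 := by omega
    obtain ⟨c, hc⟩ : ∃ c, b = 2 * c := ⟨b / 2, by omega⟩
    refine ⟨a, c, by rw [hpe, hc]; ring, ?_⟩
    rcases ha8 with h | h
    · left
      show a % 8 = 1 % 8
      omega
    · right
      show a % 8 = (-1) % 8
      omega
end
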